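/- arXiv:math/9911243 — 7 statements merged into one kernel-verified Lean document; each statement's English description precedes it below -/
import Mathlib

section
/- For all k ≤ n with k ≥ 3 and any τ ∈ T_k^k, the number of permutations of {1,…,n} that avoid every pattern in T_k^k \ {τ} and contain τ exactly once equals (n+1-k)·(k-1)^(n-k). -/
/-- An occurrence of the pattern `τ` in `α` at the strictly increasing
index sequence `f`: the subsequence `α ∘ f` is order-isomorphic to `τ`. -/
def PattOccursAt {k n : ℕ} (τ : Equiv.Perm (Fin k)) (α : Equiv.Perm (Fin n))
    (f : Fin k → Fin n) : Prop :=
  StrictMono f ∧ ∀ i j : Fin k, τ i < τ j ↔ α (f i) < α (f j)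

/-- `α` contains the pattern `τ`. -/
def Contains {k n : ℕ} (τ : Equiv.Perm (Fin k)) (α : Equiv.Perm (Fin n)) : Prop :=
  ∃ f, PattOccursAt τ α f

/-- `α` avoids the pattern `τ`. -/
def Avoids {k n : ℕ} (τ : Equiv.Perm (Fin k)) (α : Equiv.Perm (Fin n)) : Prop :=
  ¬ Contains τ α

/-- `α` contains the pattern `τ` exactly once. -/
def ContainsExactlyOnce {k n : ℕ} (τ : Equiv.Perm (Fin k)) (α : Equiv.Perm (Fin n)) : Prop :=
  ∃! f, PattOccursAt τ α f

/-- `T_k^m`: the permutations `σ` of length `k` with first entry `σ(1) = m`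
(one-based; in `Fin k` terms, `(σ 0) + 1 = m`). -/
def Tkm (k m : ℕ) : Set (Equiv.Perm (Fin k)) :=
  {σ | ∀ i : Fin k, (i : ℕ) = 0 → (σ i : ℕ) + 1 = m}

namespace Stmt9

open Equiv Finset

/-- Two injective self-maps of `Fin a` inducing the same order comparisons are equal. -/
lemma inj_order_eq {a : ℕ} {u w : Fin a → Fin a}
    (hu : Function.Injective u) (hw : Function.Injective w)
    (h : ∀ i j, u i < u j ↔ w i < w j) : u = w := by
  have hub := (Finite.injective_iff_bijective).1 hu
  have hwb := (Finite.injective_iff_bijective).1 hw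
  set ρ : Equiv.Perm (Fin a) := (Equiv.ofBijective u hub).symm.trans (Equiv.ofBijective w hwb)
    with hρ
  have hρ_apply : ∀ i, ρ (u i) = w i := by
    intro i
    show ((Equiv.ofBijective u hub).symm.trans (Equiv.ofBijective w hwb)) (u i) = w i
    have hui : u i = (Equiv.ofBijective u hub) i := rfl
    rw [hui, Equiv.trans_apply, Equiv.symm_apply_apply]
    rfl
  have hmono : StrictMono (ρ : Fin a → Fin a) := by
    intro x y hxy
    obtain ⟨i, rfl⟩ := hub.2 x
    obtain ⟨j, rfl⟩ := hub.2 y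
    rw [hρ_apply, hρ_apply]
    exact (h i j).1 hxy
  have hmono' : StrictMono (ρ.symm : Fin a → Fin a) := by
    intro x y hxy
    by_contra hcon
    push_neg at hcon
    have h2 := hmono.monotone hcon
    simp only [Equiv.apply_symm_apply] at h2
    exact absurd hxy (not_lt.2 h2)
  haveI : WellFoundedLT (Fin a) := IsWellFounded.mk wellFounded_lt
  have hid : ∀ x, ρ x = x := by
    intro x
    have h1 : x ≤ ρ x := hmono.le_apply
    have h2 : ρ x ≤ ρ.symm (ρ x) := hmono'.le_apply
    rw [Equiv.symm_apply_apply] at h2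
    exact le_antisymm h2 h1
  funext i
  rw [← hρ_apply i, hid]

/-- Two patterns occurring at the same occurrence are equal. -/
lemma patt_unique {a n : ℕ} {σ σ' : Equiv.Perm (Fin a)} {α : Equiv.Perm (Fin n)}
    {f : Fin a → Fin n} (h : PattOccursAt σ α f) (h' : PattOccursAt σ' α f) : σ = σ' := by
  have := inj_order_eq σ.injective σ'.injective
    (fun i j => (h.2 i j).trans (h'.2 i j).symm)
  exact Equiv.ext fun i => congrFun this i


/-- A "max-first" occurrence shape. -/
def MOcc {K m : ℕ} (α : Equiv.Perm (Fin m)) (f : Fin (K + 1) → Fin m) : Prop :=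
  StrictMono f ∧ ∀ j, j ≠ 0 → α (f j) < α (f 0)

lemma cardValLt {m : ℕ} (c : ℕ) (hc : c ≤ m) :
    (Finset.univ.filter fun w : Fin m => (w : ℕ) < c).card = c := by
  have himg : (Finset.univ.filter fun w : Fin m => (w : ℕ) < c)
      = Finset.image (Fin.castLE hc) Finset.univ := by
    ext w
    simp only [mem_filter, mem_univ, true_and, mem_image]
    constructor
    · intro hw
      exact ⟨⟨(w : ℕ), hw⟩, by ext; simp⟩
    · rintro ⟨y, rfl⟩
      exact y.2
  rw [himg, Finset.card_image_of_injective _ (Fin.castLE_injective hc)]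
  simp

lemma cardSmall {m : ℕ} (β : Equiv.Perm (Fin m)) (c : ℕ) (hc : c ≤ m) :
    (Finset.univ.filter fun i : Fin m => ((β i : ℕ) < c)).card = c := by
  have himg : (Finset.univ.filter fun i : Fin m => ((β i : ℕ) < c))
      = Finset.image (⇑β.symm) (Finset.univ.filter fun w : Fin m => (w : ℕ) < c) := by
    ext i
    simp only [mem_filter, mem_univ, true_and, mem_image]
    constructor
    · intro hi
      exact ⟨β i, hi, by simp⟩
    · rintro ⟨w, hw, rfl⟩
      simpa using hw
  rw [himg, Finset.card_image_of_injective _ β.symm.injective, cardValLt c hc]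

lemma lt_card {K m : ℕ} {g : Fin (K + 1) → Fin m} (hg : Function.Injective g)
    (h : ∀ j, j ≠ 0 → g j < g 0) : K ≤ (g 0 : ℕ) := by
  classical
  have hinj : Function.Injective fun i : Fin K => g i.succ := fun i j hij =>
    Fin.succ_injective _ (hg hij)
  have hsub : Finset.image (fun i : Fin K => g i.succ) Finset.univ
      ⊆ Finset.Iio (g 0) := by
    intro x hx
    simp only [mem_image, mem_univ, true_and] at hx
    obtain ⟨i, rfl⟩ := hx
    exact Finset.mem_Iio.2 (h i.succ (Fin.succ_ne_zero i))
  have h1 := Finset.card_le_card hsub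
  rwa [Finset.card_image_of_injective _ hinj, Finset.card_univ, Fintype.card_fin,
    Fin.card_Iio] at h1

lemma Mval {K m : ℕ} {α : Equiv.Perm (Fin m)} {f : Fin (K + 1) → Fin m}
    (h : MOcc α f) : K ≤ (α (f 0) : ℕ) :=
  lt_card (fun i j hij => h.1.injective (α.injective hij)) h.2

/-- Every max-first occurrence realizes some pattern whose first value is `K` (maximal). -/
lemma std {K m : ℕ} {α : Equiv.Perm (Fin m)} {f : Fin (K + 1) → Fin m}
    (h : MOcc α f) : ∃ σ : Equiv.Perm (Fin (K + 1)), (σ 0 : ℕ) = K ∧ PattOccursAt σ α f := by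
  classical
  set u : Fin (K + 1) → Fin m := fun i => α (f i) with hu
  have huinj : Function.Injective u := fun i j hij => h.1.injective (α.injective hij)
  have hcard : (Finset.image u Finset.univ).card = K + 1 := by
    rw [Finset.card_image_of_injective _ huinj]; simp
  set oe := (Finset.image u Finset.univ).orderIsoOfFin hcard with hoe
  have hmem : ∀ i, u i ∈ Finset.image u Finset.univ := fun i =>
    Finset.mem_image_of_mem _ (Finset.mem_univ i)
  set σ₀ : Fin (K + 1) → Fin (K + 1) := fun i => oe.symm ⟨u i, hmem i⟩ with hσ₀
  have hord : ∀ i j, σ₀ i < σ₀ j ↔ u i < u j := by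
    intro i j
    rw [hσ₀]
    simp only []
    rw [OrderIso.lt_iff_lt (oe.symm)]
    exact Subtype.mk_lt_mk
  have hinj : Function.Injective σ₀ := by
    intro i j hij
    apply huinj
    have h1 : ¬ u i < u j := by rw [← hord]; simp [hij]
    have h2 : ¬ u j < u i := by rw [← hord, hij]; simp
    exact le_antisymm (not_lt.1 h2) (not_lt.1 h1)
  have hbij := Finite.injective_iff_bijective.1 hinj
  refine ⟨Equiv.ofBijective σ₀ hbij, ?_, h.1, fun i j => (hord i j)⟩
  have happ : ∀ i, (Equiv.ofBijective σ₀ hbij) i = σ₀ i := fun i => rfl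
  have hlt : ∀ j, j ≠ 0 → σ₀ j < σ₀ 0 := fun j hj => (hord j 0).2 (h.2 j hj)
  have hK := lt_card hinj hlt
  have := (σ₀ 0).isLt
  rw [happ]
  omega

def Emap (m : ℕ) (p : Fin (m + 1) × Equiv.Perm (Fin m)) : Equiv.Perm (Fin (m + 1)) :=
  ((finSuccEquiv m).trans p.2.optionCongr).trans (finSuccEquiv' p.1).symm

lemma Emap_zero {m : ℕ} (v : Fin (m + 1)) (β : Equiv.Perm (Fin m)) :
    Emap m (v, β) 0 = v := by
  simp [Emap, finSuccEquiv_zero, finSuccEquiv'_symm_none]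

lemma Emap_succ {m : ℕ} (v : Fin (m + 1)) (β : Equiv.Perm (Fin m)) (i : Fin m) :
    Emap m (v, β) i.succ = v.succAbove (β i) := by
  simp [Emap, finSuccEquiv_succ, finSuccEquiv'_symm_some]

lemma Emap_bijective (m : ℕ) : Function.Bijective (Emap m) := by
  constructor
  · rintro ⟨v, β⟩ ⟨v', β'⟩ h
    have h0 : v = v' := by rw [← Emap_zero v β, ← Emap_zero v' β', h]
    subst h0
    have hβ : β = β' := by
      ext i
      have := congrArg (fun γ : Equiv.Perm (Fin (m + 1)) => γ i.succ) h
      simp only [Emap_succ] at this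
      exact congrArg Fin.val (Fin.succAbove_right_injective this)
    rw [hβ]
  · intro α
    set e : Option (Fin m) ≃ Option (Fin m) :=
      (finSuccEquiv m).symm.trans (α.trans (finSuccEquiv' (α 0))) with he
    have henone : e none = none := by
      simp [he, finSuccEquiv_symm_none, finSuccEquiv'_at]
    refine ⟨(α 0, e.removeNone), ?_⟩
    ext x
    induction x using Fin.cases with
    | zero => rw [Emap_zero]
    | succ i =>
      rw [Emap_succ]
      obtain ⟨j, hj⟩ : ∃ j, (α 0).succAbove j = α i.succ :=
        Fin.exists_succAbove_eq (fun hc => (Fin.succ_ne_zero i) (α.injective hc))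
      have hesome : e (some i) = some j := by
        simp [he, finSuccEquiv_symm_some, ← hj, finSuccEquiv'_succAbove]
      have hr : some (e.removeNone i) = e (some i) := Equiv.removeNone_some e ⟨j, hesome⟩
      rw [hesome] at hr
      have : e.removeNone i = j := Option.some_injective _ hr
      rw [this, hj]

def P0 (K : ℕ) {m : ℕ} (α : Equiv.Perm (Fin m)) : Prop :=
  ∀ f : Fin (K + 1) → Fin m, ¬ MOcc α f

def P1 {K m : ℕ} (τ : Equiv.Perm (Fin (K + 1))) (α : Equiv.Perm (Fin m)) : Prop :=
  ∃ f, MOcc α f ∧ PattOccursAt τ α f ∧ ∀ g, MOcc α g → g = f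

def SmallOrd {K m : ℕ} (τ : Equiv.Perm (Fin (K + 1))) (β : Equiv.Perm (Fin m)) : Prop :=
  ∃ q : Fin K → Fin m, StrictMono q ∧ ∀ i : Fin K, (β (q i) : ℕ) = (τ i.succ : ℕ)

lemma succAbove_lt_self_iff {m : ℕ} {v : Fin (m + 1)} {x : Fin m} :
    v.succAbove x < v ↔ (x : ℕ) < (v : ℕ) := by
  rcases lt_or_ge (x.castSucc) v with h | h
  · rw [Fin.succAbove_of_castSucc_lt _ _ h]
    have := Fin.lt_def.1 h
    simp only [Fin.coe_castSucc] at this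
    constructor <;> intro <;> [skip; exact h] <;> omega
  · rw [Fin.succAbove_of_le_castSucc _ _ h]
    have := Fin.le_def.1 h
    simp only [Fin.coe_castSucc] at this
    constructor
    · intro hc
      have := Fin.lt_def.1 hc
      simp only [Fin.val_succ] at this
      omega
    · intro hc; omega

lemma casesStrictMono {K M : ℕ} {p : Fin M} {e : Fin K → Fin M}
    (he : StrictMono e) (hpe : ∀ i, p < e i) :
    StrictMono (Fin.cases p e : Fin (K + 1) → Fin M) := by
  intro a b hab
  induction a using Fin.cases with
  | zero =>
    induction b using Fin.cases with
    | zero => exact absurd hab (lt_irrefl _)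
    | succ j => simpa using hpe j
  | succ i =>
    induction b using Fin.cases with
    | zero => exact absurd hab (by simp [Fin.lt_def])
    | succ j =>
      simp only [Fin.cases_succ]
      exact he (by rwa [Fin.succ_lt_succ_iff] at hab)

lemma succ_comp_strictMono {a m : ℕ} {f : Fin a → Fin m} (hf : StrictMono f) :
    StrictMono (Fin.succ ∘ f) := fun _ _ hab => Fin.succ_lt_succ_iff.2 (hf hab)

lemma mocc_succ_iff {K m : ℕ} (v : Fin (m + 1)) (β : Equiv.Perm (Fin m))
    (f : Fin (K + 1) → Fin m) :
    MOcc β f ↔ MOcc (Emap m (v, β)) (Fin.succ ∘ f) := by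
  have key : ∀ x y : Fin m, Emap m (v, β) x.succ < Emap m (v, β) y.succ ↔ β x < β y := by
    intro x y
    rw [Emap_succ, Emap_succ]
    exact Fin.succAbove_lt_succAbove_iff
  constructor
  · rintro ⟨h1, h2⟩
    exact ⟨succ_comp_strictMono h1, fun j hj => (key _ _).2 (h2 j hj)⟩
  · rintro ⟨h1, h2⟩
    refine ⟨fun a b hab => ?_, fun j hj => (key _ _).1 (h2 j hj)⟩
    have := h1 hab
    simpa [Fin.succ_lt_succ_iff] using this

lemma patt_succ_iff {K m : ℕ} (τ : Equiv.Perm (Fin (K + 1))) (v : Fin (m + 1))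
    (β : Equiv.Perm (Fin m)) (f : Fin (K + 1) → Fin m) :
    PattOccursAt τ β f ↔ PattOccursAt τ (Emap m (v, β)) (Fin.succ ∘ f) := by
  have key : ∀ x y : Fin m, Emap m (v, β) x.succ < Emap m (v, β) y.succ ↔ β x < β y := by
    intro x y
    rw [Emap_succ, Emap_succ]
    exact Fin.succAbove_lt_succAbove_iff
  constructor
  · rintro ⟨h1, h2⟩
    exact ⟨succ_comp_strictMono h1, fun i j => (h2 i j).trans (key _ _).symm⟩
  · rintro ⟨h1, h2⟩
    refine ⟨fun a b hab => ?_, fun i j => (h2 i j).trans (key _ _)⟩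
    have := h1 hab
    simpa [Fin.succ_lt_succ_iff] using this

lemma descend {K m : ℕ} {g : Fin (K + 1) → Fin (m + 1)} (hg : StrictMono g)
    (h0 : g 0 ≠ 0) : ∃ f : Fin (K + 1) → Fin m, g = Fin.succ ∘ f := by
  have hne : ∀ j, g j ≠ 0 := by
    intro j
    rcases eq_or_ne j 0 with rfl | hj
    · exact h0
    · have : g 0 < g j := hg (by
        rcases Fin.pos_iff_ne_zero.2 hj with h
        exact h)
      intro hc
      rw [hc] at this
      exact absurd this (by simp [Fin.lt_def])
  refine ⟨fun j => (g j).pred (hne j), ?_⟩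
  funext j
  simp [Fin.succ_pred]

/-- Construct an occurrence at position 0. -/
lemma to0 {K m : ℕ} (v : Fin (m + 1)) (β : Equiv.Perm (Fin m))
    {q : Fin K → Fin m} (hq : StrictMono q) (hval : ∀ i, (β (q i) : ℕ) < (v : ℕ)) :
    MOcc (Emap m (v, β)) (Fin.cases 0 (Fin.succ ∘ q)) := by
  constructor
  · exact casesStrictMono (succ_comp_strictMono hq) (fun i => Fin.succ_pos _)
  · intro j hj
    induction j using Fin.cases with
    | zero => exact absurd rfl hj
    | succ i =>
      simp only [Fin.cases_succ, Fin.cases_zero, Function.comp_apply]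
      rw [Emap_succ, Emap_zero]
      exact succAbove_lt_self_iff.2 (hval i)

lemma from0 {K m : ℕ} {v : Fin (m + 1)} {β : Equiv.Perm (Fin m)}
    {g : Fin (K + 1) → Fin (m + 1)} (hocc : MOcc (Emap m (v, β)) g) (h0 : g 0 = 0) :
    ∃ q : Fin K → Fin m, StrictMono q ∧ (∀ i, (β (q i) : ℕ) < (v : ℕ)) ∧
      g = Fin.cases 0 (Fin.succ ∘ q) := by
  have hgt : ∀ i : Fin K, g 0 < g i.succ := fun i => hocc.1 (Fin.succ_pos i)
  have hne : ∀ i : Fin K, g i.succ ≠ 0 := by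
    intro i hc
    have := hgt i
    rw [hc, h0] at this
    exact absurd this (lt_irrefl _)
  refine ⟨fun i => (g i.succ).pred (hne i), ?_, ?_, ?_⟩
  · intro i j hij
    have h1 : g i.succ < g j.succ := hocc.1 (Fin.succ_lt_succ_iff.2 hij)
    have h2 := Fin.lt_def.1 h1
    have e1 : (g i.succ : ℕ) ≠ 0 := fun hc => (hne i) (Fin.ext hc)
    rw [Fin.lt_def, Fin.coe_pred, Fin.coe_pred]
    omega
  · intro i
    have h1 : Emap m (v, β) (g i.succ) < Emap m (v, β) (g 0) :=
      hocc.2 i.succ (Fin.succ_ne_zero i)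
    rw [h0, Emap_zero] at h1
    have h2 : g i.succ = ((g i.succ).pred (hne i)).succ := (Fin.succ_pred _ _).symm
    rw [h2, Emap_succ] at h1
    exact succAbove_lt_self_iff.1 h1
  · funext j
    induction j using Fin.cases with
    | zero => simpa using h0
    | succ i => simp [Fin.succ_pred]

/-- If `K ≤ v`, there is an occurrence at position 0 whose tail lies in a chosen K-subset. -/
lemma occ0_of_subset {K m : ℕ} (v : Fin (m + 1)) (β : Equiv.Perm (Fin m))
    {T : Finset (Fin m)} (hT : T.card = K) (hsub : ∀ x ∈ T, (β x : ℕ) < (v : ℕ)) :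
    MOcc (Emap m (v, β)) (Fin.cases 0 (Fin.succ ∘ ⇑(T.orderEmbOfFin hT))) :=
  to0 v β (T.orderEmbOfFin hT).strictMono
    (fun i => hsub _ (T.orderEmbOfFin_mem hT i))

lemma exists_occ0 {K m : ℕ} (v : Fin (m + 1)) (β : Equiv.Perm (Fin m))
    (hv : K ≤ (v : ℕ)) : ∃ g : Fin (K + 1) → Fin (m + 1), MOcc (Emap m (v, β)) g ∧ g 0 = 0 := by
  classical
  have hScard : (Finset.univ.filter fun i : Fin m => ((β i : ℕ) < (v : ℕ))).card = (v : ℕ) :=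
    cardSmall β _ (by omega)
  obtain ⟨T, hTsub, hTcard⟩ := Finset.exists_subset_card_eq (hv.trans hScard.ge)
  refine ⟨_, occ0_of_subset v β hTcard (fun x hx => ?_), by simp⟩
  have := hTsub hx
  simpa using this

lemma no_occ0 {K m : ℕ} {v : Fin (m + 1)} {β : Equiv.Perm (Fin m)}
    {g : Fin (K + 1) → Fin (m + 1)} (hocc : MOcc (Emap m (v, β)) g) (h0 : g 0 = 0)
    : K ≤ (v : ℕ) := by
  have := Mval hocc
  rwa [h0, Emap_zero] at this

lemma P0_Emap {K m : ℕ} (v : Fin (m + 1)) (β : Equiv.Perm (Fin m)) :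
    P0 K (Emap m (v, β)) ↔ ((v : ℕ) < K ∧ P0 K β) := by
  constructor
  · intro h
    constructor
    · by_contra hc
      push_neg at hc
      obtain ⟨g, hg, _⟩ := exists_occ0 v β hc
      exact h g hg
    · intro f hf
      exact h _ ((mocc_succ_iff v β f).1 hf)
  · rintro ⟨hv, hβ⟩ g hg
    rcases eq_or_ne (g 0) 0 with h0 | h0
    · exact absurd (no_occ0 hg h0) (by omega)
    · obtain ⟨f, rfl⟩ := descend hg.1 h0
      exact hβ f ((mocc_succ_iff v β f).2 hg)

lemma tau_succ_lt {K : ℕ} {τ : Equiv.Perm (Fin (K + 1))} (hτ0 : (τ 0 : ℕ) = K)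
    (i : Fin K) : (τ i.succ : ℕ) < K := by
  have h1 : τ i.succ ≠ τ 0 := fun hc => Fin.succ_ne_zero i (τ.injective hc)
  have h2 : (τ i.succ : ℕ) < K + 1 := (τ i.succ).isLt
  have h3 : (τ i.succ : ℕ) ≠ K := by
    intro hc
    exact h1 (Fin.ext (by rw [hc, hτ0]))
  omega

lemma P1_Emap {K m : ℕ} (hK : 1 ≤ K) (τ : Equiv.Perm (Fin (K + 1)))
    (hτ0 : (τ 0 : ℕ) = K) (v : Fin (m + 1)) (β : Equiv.Perm (Fin m)) :
    P1 τ (Emap m (v, β)) ↔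
      (((v : ℕ) < K ∧ P1 τ β) ∨ ((v : ℕ) = K ∧ P0 K β ∧ SmallOrd τ β)) := by
  classical
  constructor
  · rintro ⟨f, hocc, hpatt, huniq⟩
    rcases lt_or_ge ((v : ℕ)) K with hvK | hvK
    · left
      refine ⟨hvK, ?_⟩
      have h0 : f 0 ≠ 0 := fun hc => absurd (no_occ0 hocc hc) (by omega)
      obtain ⟨f₀, rfl⟩ := descend hocc.1 h0
      refine ⟨f₀, (mocc_succ_iff v β f₀).2 hocc, (patt_succ_iff τ v β f₀).2 hpatt, ?_⟩
      intro g hg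
      have := huniq _ ((mocc_succ_iff v β g).1 hg)
      funext i
      exact Fin.succ_injective _ (congrFun this i)
    · right
      -- there is an occurrence at 0, so f 0 = 0
      obtain ⟨g₁, hg₁, hg₁0⟩ := exists_occ0 v β hvK
      have hf0 : f 0 = 0 := by rw [← huniq g₁ hg₁]; exact hg₁0
      -- v = K
      have hvEq : (v : ℕ) = K := by
        by_contra hc
        have hvgt : K + 1 ≤ (v : ℕ) := by omega
        have hScard : (Finset.univ.filter fun i : Fin m => ((β i : ℕ) < (v : ℕ))).card
            = (v : ℕ) := cardSmall β _ (by omega)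
        obtain ⟨T, hTsub, hTcard⟩ :=
          Finset.exists_subset_card_eq (hvgt.trans hScard.ge)
        set e := T.orderEmbOfFin hTcard with he
        have hmemv : ∀ x ∈ T, (β x : ℕ) < (v : ℕ) := by
          intro x hx
          have := hTsub hx
          simpa using this
        have hqa : StrictMono (⇑e ∘ Fin.castSucc) :=
          e.strictMono.comp Fin.strictMono_castSucc
        have hqb : StrictMono (⇑e ∘ Fin.succ) :=
          e.strictMono.comp (fun a b hab => Fin.succ_lt_succ_iff.2 hab)
        have hva : ∀ i : Fin K, (β ((⇑e ∘ Fin.castSucc) i) : ℕ) < (v : ℕ) :=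
          fun i => hmemv _ (T.orderEmbOfFin_mem hTcard _)
        have hvb : ∀ i : Fin K, (β ((⇑e ∘ Fin.succ) i) : ℕ) < (v : ℕ) :=
          fun i => hmemv _ (T.orderEmbOfFin_mem hTcard _)
        have ha := to0 v β hqa hva
        have hb := to0 v β hqb hvb
        have hab := (huniq _ ha).trans (huniq _ hb).symm
        set i0 : Fin K := ⟨0, hK⟩ with hi0
        have := congrFun hab i0.succ
        simp only [Fin.cases_succ, Function.comp_apply] at this
        have h2 := Fin.succ_injective _ this
        have h3 : e i0.castSucc < e i0.succ := e.strictMono (Fin.castSucc_lt_succ (i := i0))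
        rw [h2] at h3
        exact absurd h3 (lt_irrefl _)
      refine ⟨hvEq, ?_, ?_⟩
      · intro f' hf'
        have := huniq _ ((mocc_succ_iff v β f').1 hf')
        have h2 := congrFun this 0
        simp only [Function.comp_apply] at h2
        rw [hf0] at h2
        exact Fin.succ_ne_zero _ h2
      · obtain ⟨q, hqmono, hqval, hfq⟩ := from0 hocc hf0
        refine ⟨q, hqmono, ?_⟩
        have hu : ∀ i : Fin K, (β (q i) : ℕ) < K := fun i => by
          have := hqval i; omega
        set u : Fin K → Fin K := fun i => ⟨(β (q i) : ℕ), hu i⟩ with hudef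
        set w : Fin K → Fin K := fun i => ⟨(τ i.succ : ℕ), tau_succ_lt hτ0 i⟩ with hwdef
        have huinj : Function.Injective u := by
          intro i j hij
          have hval : ((β (q i) : ℕ)) = ((β (q j) : ℕ)) := by
            simpa [hudef] using congrArg Fin.val hij
          have : β (q i) = β (q j) := Fin.ext hval
          exact hqmono.injective (β.injective this)
        have hwinj : Function.Injective w := by
          intro i j hij
          have hval : ((τ i.succ : ℕ)) = ((τ j.succ : ℕ)) := by
            simpa [hwdef] using congrArg Fin.val hij
          have : τ i.succ = τ j.succ := Fin.ext hval
          exact Fin.succ_injective _ (τ.injective this)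
        have hiff : ∀ i j, u i < u j ↔ w i < w j := by
          intro i j
          have h1 := hpatt.2 i.succ j.succ
          rw [hfq] at h1
          simp only [Fin.cases_succ, Function.comp_apply] at h1
          rw [Emap_succ, Emap_succ] at h1
          rw [Fin.succAbove_lt_succAbove_iff] at h1
          constructor
          · intro hc
            have : β (q i) < β (q j) := by
              rw [Fin.lt_def]; exact hc
            rw [Fin.lt_def]
            exact Fin.lt_def.1 (h1.2 this)
          · intro hc
            have : τ i.succ < τ j.succ := by
              rw [Fin.lt_def]; exact hc
            rw [Fin.lt_def]
            exact Fin.lt_def.1 (h1.1 this)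
        have := inj_order_eq huinj hwinj hiff
        intro i
        exact congrArg Fin.val (congrFun this i)
  · rintro (⟨hvK, f₀, h₀occ, h₀patt, h₀uniq⟩ | ⟨hvK, hP0, q, hqmono, hqval⟩)
    · refine ⟨Fin.succ ∘ f₀, (mocc_succ_iff v β f₀).1 h₀occ,
        (patt_succ_iff τ v β f₀).1 h₀patt, ?_⟩
      intro g hg
      have h0 : g 0 ≠ 0 := fun hc => absurd (no_occ0 hg hc) (by omega)
      obtain ⟨g₀, rfl⟩ := descend hg.1 h0
      rw [h₀uniq g₀ ((mocc_succ_iff v β g₀).2 hg)]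
    · have hqval' : ∀ i, (β (q i) : ℕ) < (v : ℕ) := by
        intro i
        rw [hqval i, hvK]
        exact tau_succ_lt hτ0 i
      set f : Fin (K + 1) → Fin (m + 1) := Fin.cases 0 (Fin.succ ∘ q) with hf
      have hocc : MOcc (Emap m (v, β)) f := to0 v β hqmono hqval'
      refine ⟨f, hocc, ⟨hocc.1, ?_⟩, ?_⟩
      · intro i j
        have hval0 : Emap m (v, β) (f 0) = v := by
          simp only [hf, Fin.cases_zero]
          exact Emap_zero v β
        have hvals : ∀ a : Fin K, Emap m (v, β) (f a.succ) = v.succAbove (β (q a)) := by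
          intro a
          simp only [hf, Fin.cases_succ, Function.comp_apply]
          exact Emap_succ v β (q a)
        induction i using Fin.cases with
        | zero =>
          induction j using Fin.cases with
          | zero => simp
          | succ b =>
            rw [hval0, hvals b]
            have hL : ¬ τ 0 < τ b.succ := by
              rw [Fin.lt_def, hτ0]
              have := tau_succ_lt hτ0 b
              omega
            have hR : ¬ v < v.succAbove (β (q b)) := by
              have := succAbove_lt_self_iff.2 (hqval' b)
              exact not_lt.2 this.le
            exact iff_of_false hL hR
        | succ a =>
          induction j using Fin.cases with
          | zero =>
            rw [hval0, hvals a]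
            have hL : τ a.succ < τ 0 := by
              rw [Fin.lt_def, hτ0]
              exact tau_succ_lt hτ0 a
            have hR : v.succAbove (β (q a)) < v := succAbove_lt_self_iff.2 (hqval' a)
            exact iff_of_true hL hR
          | succ b =>
            rw [hvals a, hvals b, Fin.succAbove_lt_succAbove_iff]
            rw [Fin.lt_def, Fin.lt_def, hqval a, hqval b]
      · intro g hg
        have h0 : g 0 = 0 := by
          by_contra h0
          obtain ⟨g₀, rfl⟩ := descend hg.1 h0
          exact hP0 g₀ ((mocc_succ_iff v β g₀).2 hg)
        obtain ⟨q', hq'mono, hq'val, hgq⟩ := from0 hg h0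
        have hKm : K ≤ m := by
          have := v.isLt
          omega
        have hScard : (Finset.univ.filter fun i : Fin m => ((β i : ℕ) < K)).card = K :=
          cardSmall β K hKm
        have hq'eq : q' = ⇑((Finset.univ.filter fun i : Fin m => ((β i : ℕ) < K)).orderEmbOfFin
            hScard) := by
          apply Finset.orderEmbOfFin_unique hScard
          · intro x
            simp only [Finset.mem_filter, Finset.mem_univ, true_and]
            have := hq'val x
            omega
          · exact hq'mono
        have hqeq : q = ⇑((Finset.univ.filter fun i : Fin m => ((β i : ℕ) < K)).orderEmbOfFin
            hScard) := by
          apply Finset.orderEmbOfFin_unique hScard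
          · intro x
            simp only [Finset.mem_filter, Finset.mem_univ, true_and]
            have := hqval' x
            omega
          · exact hqmono
        rw [hgq, hf, hq'eq, hqeq]

section Action

variable {K m : ℕ}

/-- The values `< K` inside `Fin m`. -/
def emb (hKm : K ≤ m) : Fin K ≃ {w : Fin m // (w : ℕ) < K} where
  toFun i := ⟨Fin.castLE hKm i, i.isLt⟩
  invFun w := ⟨(w.1 : ℕ), w.2⟩
  left_inv i := rfl
  right_inv w := rfl

/-- Extend a permutation of the small values to all of `Fin m`. -/
def extPerm (hKm : K ≤ m) (π : Equiv.Perm (Fin K)) : Equiv.Perm (Fin m) :=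
  π.extendDomain (emb hKm)

lemma extPerm_big (hKm : K ≤ m) (π : Equiv.Perm (Fin K)) {w : Fin m}
    (hw : ¬ (w : ℕ) < K) : extPerm hKm π w = w :=
  Equiv.Perm.extendDomain_apply_not_subtype π (emb hKm) hw

lemma extPerm_small (hKm : K ≤ m) (π : Equiv.Perm (Fin K)) {w : Fin m}
    (hw : (w : ℕ) < K) : (extPerm hKm π w : ℕ) = (π ⟨(w : ℕ), hw⟩ : ℕ) := by
  have h1 : extPerm hKm π w = emb hKm (π ((emb hKm).symm ⟨w, hw⟩)) :=
    Equiv.Perm.extendDomain_apply_subtype π (emb hKm) hw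
  rw [h1]
  rfl

lemma extPerm_small_lt (hKm : K ≤ m) (π : Equiv.Perm (Fin K)) {w : Fin m}
    (hw : (w : ℕ) < K) : (extPerm hKm π w : ℕ) < K := by
  rw [extPerm_small hKm π hw]
  exact (π _).isLt

lemma extPerm_lt_iff (hKm : K ≤ m) (π : Equiv.Perm (Fin K)) (w : Fin m) :
    (extPerm hKm π w : ℕ) < K ↔ (w : ℕ) < K := by
  by_cases hw : (w : ℕ) < K
  · exact iff_of_true (extPerm_small_lt hKm π hw) hw
  · rw [extPerm_big hKm π hw]

lemma mocc_ext_iff (hKm : K ≤ m) (π : Equiv.Perm (Fin K)) (β : Equiv.Perm (Fin m))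
    (f : Fin (K + 1) → Fin m) :
    MOcc (extPerm hKm π * β) f ↔ MOcc β f := by
  set γ := extPerm hKm π * β with hγ
  have happ : ∀ x, γ x = extPerm hKm π (β x) := fun x => rfl
  constructor
  · rintro ⟨h1, h2⟩
    have hbig : K ≤ (γ (f 0) : ℕ) := Mval ⟨h1, h2⟩
    have hβbig : ¬ ((β (f 0) : ℕ) < K) := by
      intro hc
      have := extPerm_small_lt hKm π hc
      rw [← happ] at this
      omega
    have h0 : γ (f 0) = β (f 0) := by rw [happ, extPerm_big hKm π hβbig]
    refine ⟨h1, fun j hj => ?_⟩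
    have hlt := h2 j hj
    rw [h0] at hlt
    by_cases hsm : (β (f j) : ℕ) < K
    · rw [Fin.lt_def]
      have := extPerm_small_lt hKm π hsm
      omega
    · rwa [happ, extPerm_big hKm π hsm] at hlt
  · rintro ⟨h1, h2⟩
    have hbig : K ≤ (β (f 0) : ℕ) := Mval ⟨h1, h2⟩
    have h0 : γ (f 0) = β (f 0) := by
      rw [happ, extPerm_big hKm π (by omega)]
    refine ⟨h1, fun j hj => ?_⟩
    have hlt := h2 j hj
    rw [h0]
    by_cases hsm : (β (f j) : ℕ) < K
    · rw [Fin.lt_def]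
      have := extPerm_small_lt hKm π hsm
      rw [← happ] at this
      omega
    · rw [happ, extPerm_big hKm π hsm]
      exact hlt

lemma P0_ext_iff (hKm : K ≤ m) (π : Equiv.Perm (Fin K)) (β : Equiv.Perm (Fin m)) :
    P0 K (extPerm hKm π * β) ↔ P0 K β := by
  constructor <;> intro h f hf
  · exact h f ((mocc_ext_iff hKm π β f).2 hf)
  · exact h f ((mocc_ext_iff hKm π β f).1 hf)

/-- The small-value set of a permutation. -/
def Sset (K : ℕ) {m : ℕ} (β : Equiv.Perm (Fin m)) : Finset (Fin m) :=
  Finset.univ.filter fun i : Fin m => ((β i : ℕ) < K)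

lemma Sset_card (hKm : K ≤ m) (β : Equiv.Perm (Fin m)) : (Sset K β).card = K :=
  cardSmall β K hKm

lemma Sset_ext (hKm : K ≤ m) (π : Equiv.Perm (Fin K)) (β : Equiv.Perm (Fin m)) :
    Sset K (extPerm hKm π * β) = Sset K β := by
  ext i
  simp only [Sset, mem_filter, mem_univ, true_and]
  exact extPerm_lt_iff hKm π (β i)

lemma smallOrd_q_eq (hKm : K ≤ m) {τ : Equiv.Perm (Fin (K + 1))}
    {β : Equiv.Perm (Fin m)} (hτ0 : (τ 0 : ℕ) = K)
    {q : Fin K → Fin m} (hq : StrictMono q)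
    (hval : ∀ i : Fin K, (β (q i) : ℕ) = (τ i.succ : ℕ)) :
    q = ⇑((Sset K β).orderEmbOfFin (Sset_card hKm β)) := by
  apply Finset.orderEmbOfFin_unique
  · intro x
    simp only [Sset, mem_filter, mem_univ, true_and]
    rw [hval x]
    exact tau_succ_lt hτ0 x
  · exact hq

theorem act_bijOn (hKm : K ≤ m) (τ : Equiv.Perm (Fin (K + 1))) (hτ0 : (τ 0 : ℕ) = K) :
    Set.BijOn (fun p : Equiv.Perm (Fin K) × Equiv.Perm (Fin m) => extPerm hKm p.1 * p.2)
      (Set.univ ×ˢ {β | P0 K β ∧ SmallOrd τ β}) {γ | P0 K γ} := by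
  classical
  refine ⟨?_, ?_, ?_⟩
  · rintro ⟨π, β⟩ ⟨-, hβ0, -⟩
    exact (P0_ext_iff hKm π β).2 hβ0
  · rintro ⟨π, β⟩ ⟨-, hβ0, q, hq, hqv⟩ ⟨π', β'⟩ ⟨-, hβ'0, q', hq', hq'v⟩ heq
    simp only at heq
    -- the small-value sets agree
    have hS : Sset K β = Sset K β' := by
      rw [← Sset_ext hKm π β, ← Sset_ext hKm π' β', heq]
    have hqeq : q = ⇑((Sset K β).orderEmbOfFin (Sset_card hKm β)) :=
      smallOrd_q_eq hKm hτ0 hq hqv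
    have hq'eq : q' = ⇑((Sset K β).orderEmbOfFin (Sset_card hKm β)) := by
      apply Finset.orderEmbOfFin_unique
      · intro x
        rw [hS]
        simp only [Sset, mem_filter, mem_univ, true_and]
        rw [hq'v x]
        exact tau_succ_lt hτ0 x
      · exact hq'
    have hqq' : q = q' := by rw [hqeq, hq'eq]
    have hββ' : β = β' := by
      apply Equiv.ext
      intro i
      by_cases hi : i ∈ Sset K β
      · obtain ⟨j, hj⟩ : ∃ j, q j = i := by
          have hrange := Finset.range_orderEmbOfFin (Sset K β) (Sset_card hKm β)
          rw [hqeq]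
          have : i ∈ Set.range ⇑((Sset K β).orderEmbOfFin (Sset_card hKm β)) := by
            rw [hrange]; exact hi
          exact this
        apply Fin.ext
        have e1 : (β i : ℕ) = (τ j.succ : ℕ) := by rw [← hj]; exact hqv j
        have e2 : (β' i : ℕ) = (τ j.succ : ℕ) := by
          rw [← hj, hqq']
          exact hq'v j
        rw [e1, e2]
      · simp only [Sset, mem_filter, mem_univ, true_and] at hi
        have hi' : ¬ ((β' i : ℕ) < K) := by
          have : i ∈ Sset K β ↔ i ∈ Sset K β' := by rw [hS]
          simp only [Sset, mem_filter, mem_univ, true_and] at this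
          tauto
        have h1 : extPerm hKm π (β i) = β i := extPerm_big hKm π hi
        have h2 : extPerm hKm π' (β' i) = β' i := extPerm_big hKm π' hi'
        have h3 : extPerm hKm π (β i) = extPerm hKm π' (β' i) := by
          have := congrArg (fun γ : Equiv.Perm (Fin m) => γ i) heq
          simpa using this
        rw [h1, h2] at h3
        exact h3
    subst hββ'
    have hext : extPerm hKm π = extPerm hKm π' := by
      have := mul_right_cancel heq
      exact this
    have hππ' : π = π' := by
      apply Equiv.ext
      intro x
      have h1 : extPerm hKm π ((emb hKm x : {w : Fin m // (w : ℕ) < K})) =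
          (emb hKm (π x) : Fin m) := Equiv.Perm.extendDomain_apply_image π (emb hKm) x
      have h2 : extPerm hKm π' ((emb hKm x : {w : Fin m // (w : ℕ) < K})) =
          (emb hKm (π' x) : Fin m) := Equiv.Perm.extendDomain_apply_image π' (emb hKm) x
      rw [hext] at h1
      rw [h1] at h2
      exact (emb hKm).injective (Subtype.coe_injective h2)
    rw [hππ']
  · intro γ hγ
    -- build the pair
    set S := Sset K γ with hSdef
    set q₀ := S.orderEmbOfFin (Sset_card hKm γ) with hq₀
    have hq₀mem : ∀ i, q₀ i ∈ S := fun i => S.orderEmbOfFin_mem _ i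
    have hc_lt : ∀ i : Fin K, (γ (q₀ i) : ℕ) < K := by
      intro i
      have := hq₀mem i
      simp only [hSdef, Sset, mem_filter, mem_univ, true_and] at this
      exact this
    set c : Fin K → Fin K := fun i => ⟨(γ (q₀ i) : ℕ), hc_lt i⟩ with hcdef
    have hcinj : Function.Injective c := by
      intro i j hij
      have hval : ((γ (q₀ i) : ℕ)) = ((γ (q₀ j) : ℕ)) := by
        simpa [hcdef] using congrArg Fin.val hij
      exact q₀.injective (γ.injective (Fin.ext hval))
    set w : Fin K → Fin K := fun i => ⟨(τ i.succ : ℕ), tau_succ_lt hτ0 i⟩ with hwdef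
    have hwinj : Function.Injective w := by
      intro i j hij
      have hval : ((τ i.succ : ℕ)) = ((τ j.succ : ℕ)) := by
        simpa [hwdef] using congrArg Fin.val hij
      exact Fin.succ_injective _ (τ.injective (Fin.ext hval))
    set ec := Equiv.ofBijective c (Finite.injective_iff_bijective.1 hcinj) with hec
    set ew := Equiv.ofBijective w (Finite.injective_iff_bijective.1 hwinj) with hew
    set π := ew.symm.trans ec with hπ
    set β := (extPerm hKm π)⁻¹ * γ with hβ
    have hfix : extPerm hKm π * β = γ := by
      rw [hβ]
      group

    have hβP0 : P0 K β := by
      have := (P0_ext_iff hKm π β).1 (by rwa [hfix])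
      exact this
    refine ⟨(π, β), ⟨Set.mem_univ _, hβP0, ⟨⇑q₀, q₀.strictMono, ?_⟩⟩, by simpa using hfix⟩
    intro i
    have hγval : (γ (q₀ i) : ℕ) < K := hc_lt i
    have hβq : β (q₀ i) = (extPerm hKm π)⁻¹ (γ (q₀ i)) := rfl
    have hinv : (extPerm hKm π)⁻¹ = extPerm hKm π⁻¹ :=
      Equiv.Perm.extendDomain_inv π (emb hKm)
    rw [hβq, hinv, ]
    have hsm := extPerm_small hKm π⁻¹ hγval
    rw [hsm]
    have : (π⁻¹ ⟨(γ (q₀ i) : ℕ), hγval⟩) = ew (ec.symm ⟨(γ (q₀ i) : ℕ), hγval⟩) := rfl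
    rw [this]
    have hceq : (⟨(γ (q₀ i) : ℕ), hγval⟩ : Fin K) = ec i := rfl
    rw [hceq, Equiv.symm_apply_apply]
    rfl
end Action

lemma ncard_prod {A B : Type*} (s : Set A) (t : Set B) :
    (s ×ˢ t).ncard = s.ncard * t.ncard := by
  rw [← Nat.card_coe_set_eq, ← Nat.card_coe_set_eq, ← Nat.card_coe_set_eq, ← Nat.card_prod]
  exact Nat.card_congr (Equiv.Set.prod s t)

lemma image_Emap {m : ℕ} (Q : Equiv.Perm (Fin (m + 1)) → Prop)
    (R : Fin (m + 1) × Equiv.Perm (Fin m) → Prop) (h : ∀ p, Q (Emap m p) ↔ R p) :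
    {α | Q α} = Emap m '' {p | R p} := by
  ext α
  constructor
  · intro hα
    obtain ⟨p, rfl⟩ := (Emap_bijective m).2 α
    exact ⟨p, (h p).1 hα, rfl⟩
  · rintro ⟨p, hp, rfl⟩
    exact (h p).2 hp

lemma ncard_val_lt (K N : ℕ) (h : K ≤ N) : {v : Fin N | (v : ℕ) < K}.ncard = K := by
  have hs : {v : Fin N | (v : ℕ) < K} = ↑(Finset.univ.filter fun w : Fin N => (w : ℕ) < K) := by
    ext v; simp
  rw [hs, Set.ncard_coe_finset, cardValLt K h]

lemma ncard_val_eq (K N : ℕ) (h : K < N) : {v : Fin N | (v : ℕ) = K}.ncard = 1 := by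
  have hs : {v : Fin N | (v : ℕ) = K} = {(⟨K, h⟩ : Fin N)} := by
    ext v
    simp only [Set.mem_setOf_eq, Set.mem_singleton_iff]
    constructor
    · intro hv; exact Fin.ext hv
    · rintro rfl; rfl
  rw [hs, Set.ncard_singleton]

lemma P0_card {K m : ℕ} (hm : K ≤ m) :
    {β : Equiv.Perm (Fin m) | P0 K β}.ncard = K.factorial * K ^ (m - K) := by
  induction m, hm using Nat.le_induction with
  | base =>
    have hall : {β : Equiv.Perm (Fin K) | P0 K β} = Set.univ := by
      ext β
      simp only [Set.mem_setOf_eq, Set.mem_univ, iff_true]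
      intro f hf
      have h1 := Mval hf
      have h2 := (β (f 0)).isLt
      omega
    rw [hall, Set.ncard_univ, Nat.card_eq_fintype_card, Fintype.card_perm, Fintype.card_fin]
    simp
  | succ m hm ih =>
    have hset : {β : Equiv.Perm (Fin (m + 1)) | P0 K β}
        = Emap m '' {p | ((p.1 : ℕ) < K) ∧ P0 K p.2} := by
      exact image_Emap _ _ (fun p => P0_Emap p.1 p.2)
    have hprod : {p : Fin (m + 1) × Equiv.Perm (Fin m) | ((p.1 : ℕ) < K) ∧ P0 K p.2}
        = {v : Fin (m + 1) | (v : ℕ) < K} ×ˢ {β | P0 K β} := by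
      ext p
      simp [Set.mem_prod]
    rw [hset, Set.ncard_image_of_injective _ (Emap_bijective m).1, hprod, ncard_prod,
      ncard_val_lt K (m + 1) (by omega), ih]
    have h3 : m + 1 - K = (m - K) + 1 := by omega
    rw [h3, pow_succ]
    ring

lemma P2_card {K m : ℕ} (τ : Equiv.Perm (Fin (K + 1))) (hτ0 : (τ 0 : ℕ) = K)
    (hm : K ≤ m) :
    {β : Equiv.Perm (Fin m) | P0 K β ∧ SmallOrd τ β}.ncard = K ^ (m - K) := by
  have hb := act_bijOn hm τ hτ0
  have h1 : {γ : Equiv.Perm (Fin m) | P0 K γ}.ncard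
      = ((Set.univ : Set (Equiv.Perm (Fin K))) ×ˢ
          {β : Equiv.Perm (Fin m) | P0 K β ∧ SmallOrd τ β}).ncard := by
    rw [← hb.image_eq]
    exact Set.ncard_image_of_injOn hb.injOn
  rw [ncard_prod, Set.ncard_univ, Nat.card_eq_fintype_card, Fintype.card_perm,
    Fintype.card_fin, P0_card hm] at h1
  exact (Nat.eq_of_mul_eq_mul_left (Nat.factorial_pos K) h1).symm

lemma P1_card {K : ℕ} (hK : 1 ≤ K) (τ : Equiv.Perm (Fin (K + 1))) (hτ0 : (τ 0 : ℕ) = K)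
    {m : ℕ} (hm : K + 1 ≤ m) :
    {α : Equiv.Perm (Fin m) | P1 τ α}.ncard = (m - K) * K ^ (m - K - 1) := by
  induction m, hm using Nat.le_induction with
  | base =>
    have hnoP1 : ∀ β : Equiv.Perm (Fin K), ¬ P1 τ β := by
      rintro β ⟨f, hf, -⟩
      have h1 := Mval hf
      have h2 := (β (f 0)).isLt
      omega
    have hset : {α : Equiv.Perm (Fin (K + 1)) | P1 τ α}
        = Emap K '' {p | ((p.1 : ℕ) = K) ∧ (P0 K p.2 ∧ SmallOrd τ p.2)} := by
      refine image_Emap _ _ (fun p => ?_)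
      rw [P1_Emap hK τ hτ0 p.1 p.2]
      constructor
      · rintro (⟨h1, h2⟩ | h)
        · exact absurd h2 (hnoP1 _)
        · exact h
      · intro h
        right
        exact h
    have hprod : {p : Fin (K + 1) × Equiv.Perm (Fin K) | ((p.1 : ℕ) = K) ∧ (P0 K p.2 ∧ SmallOrd τ p.2)}
        = {v : Fin (K + 1) | (v : ℕ) = K} ×ˢ {β | P0 K β ∧ SmallOrd τ β} := by
      ext p
      simp [Set.mem_prod]
    rw [hset, Set.ncard_image_of_injective _ (Emap_bijective K).1, hprod, ncard_prod,
      ncard_val_eq K (K + 1) (by omega), P2_card τ hτ0 (le_refl K)]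
    simp
  | succ m hm ih =>
    have hset : {α : Equiv.Perm (Fin (m + 1)) | P1 τ α}
        = Emap m '' ({p | ((p.1 : ℕ) < K) ∧ P1 τ p.2} ∪
            {p | ((p.1 : ℕ) = K) ∧ (P0 K p.2 ∧ SmallOrd τ p.2)}) := by
      refine image_Emap _ _ (fun p => ?_)
      rw [P1_Emap hK τ hτ0 p.1 p.2]
      constructor
      · rintro (h | h)
        · exact Or.inl h
        · exact Or.inr ⟨h.1, h.2⟩
      · rintro (h | h)
        · exact Or.inl h
        · exact Or.inr ⟨h.1, h.2⟩
    have hprod1 : {p : Fin (m + 1) × Equiv.Perm (Fin m) | ((p.1 : ℕ) < K) ∧ P1 τ p.2}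
        = {v : Fin (m + 1) | (v : ℕ) < K} ×ˢ {β | P1 τ β} := by
      ext p; simp [Set.mem_prod]
    have hprod2 : {p : Fin (m + 1) × Equiv.Perm (Fin m) | ((p.1 : ℕ) = K) ∧ (P0 K p.2 ∧ SmallOrd τ p.2)}
        = {v : Fin (m + 1) | (v : ℕ) = K} ×ˢ {β | P0 K β ∧ SmallOrd τ β} := by
      ext p; simp [Set.mem_prod]
    have hdisj : Disjoint {p : Fin (m + 1) × Equiv.Perm (Fin m) | ((p.1 : ℕ) < K) ∧ P1 τ p.2}
        {p | ((p.1 : ℕ) = K) ∧ (P0 K p.2 ∧ SmallOrd τ p.2)} := by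
      rw [Set.disjoint_left]
      rintro p ⟨h1, -⟩ ⟨h2, -⟩
      omega
    rw [hset, Set.ncard_image_of_injective _ (Emap_bijective m).1,
      Set.ncard_union_eq hdisj (Set.toFinite _) (Set.toFinite _), hprod1, hprod2,
      ncard_prod, ncard_prod, ncard_val_lt K (m + 1) (by omega),
      ncard_val_eq K (m + 1) (by omega), ih, P2_card τ hτ0 (by omega)]
    have h3 : m - K = (m - K - 1) + 1 := by omega
    have h4 : m + 1 - K = (m - K) + 1 := by omega
    have h5 : m + 1 - K - 1 = m - K := by omega
    rw [h5, h4, one_mul]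
    calc K * ((m - K) * K ^ (m - K - 1)) + K ^ (m - K)
        = (m - K) * (K ^ (m - K - 1) * K) + K ^ (m - K) := by ring
      _ = (m - K) * K ^ (m - K) + K ^ (m - K) := by rw [← pow_succ, ← h3]
      _ = (m - K + 1) * K ^ (m - K) := by ring

lemma lt0 {K : ℕ} {σ : Equiv.Perm (Fin (K + 1))} (hσ0 : (σ 0 : ℕ) = K)
    {j : Fin (K + 1)} (hj : j ≠ 0) : σ j < σ 0 := by
  have h1 : σ j ≠ σ 0 := fun hc => hj (σ.injective hc)
  have h2 : (σ j : ℕ) < K + 1 := (σ j).isLt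
  have h3 : (σ j : ℕ) ≠ (σ 0 : ℕ) := fun hc => h1 (Fin.ext hc)
  rw [Fin.lt_def, hσ0]
  omega

lemma mem_Tkm_iff {K : ℕ} (σ : Equiv.Perm (Fin (K + 1))) :
    σ ∈ Tkm (K + 1) (K + 1) ↔ (σ 0 : ℕ) = K := by
  constructor
  · intro h
    have := h 0 rfl
    omega
  · intro h i hi
    have : i = 0 := Fin.ext hi
    rw [this, h]

lemma sets_eq {K n : ℕ} (τ : Equiv.Perm (Fin (K + 1))) (hτ0 : (τ 0 : ℕ) = K) :
    {α : Equiv.Perm (Fin n) |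
        (∀ σ ∈ Tkm (K + 1) (K + 1), σ ≠ τ → Avoids σ α) ∧ ContainsExactlyOnce τ α}
      = {α : Equiv.Perm (Fin n) | P1 τ α} := by
  ext α
  simp only [Set.mem_setOf_eq]
  constructor
  · rintro ⟨h1, f, hf, huniqf⟩
    have hMf : MOcc α f := ⟨hf.1, fun j hj => (hf.2 j 0).1 (lt0 hτ0 hj)⟩
    refine ⟨f, hMf, hf, ?_⟩
    intro g hg
    obtain ⟨σ, hσ0, hσp⟩ := std hg
    have hστ : σ = τ := by
      by_contra hc
      exact h1 σ ((mem_Tkm_iff σ).2 hσ0) hc ⟨g, hσp⟩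
    rw [hστ] at hσp
    exact huniqf g hσp
  · rintro ⟨f, hocc, hpatt, huniq⟩
    constructor
    · intro σ hσ hστ ⟨g, hgp⟩
      have hσ0 : (σ 0 : ℕ) = K := (mem_Tkm_iff σ).1 hσ
      have hMg : MOcc α g := ⟨hgp.1, fun j hj => (hgp.2 j 0).1 (lt0 hσ0 hj)⟩
      have := huniq g hMg
      subst this
      exact hστ (patt_unique hgp hpatt)
    · refine ⟨f, hpatt, ?_⟩
      intro g hg
      exact huniq g ⟨hg.1, fun j hj => (hg.2 j 0).1 (lt0 hτ0 hj)⟩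


end Stmt9

open Stmt9 in
theorem stmt9 (k n : ℕ) (hk : 3 ≤ k) (hkn : k ≤ n)
    (τ : Equiv.Perm (Fin k)) (hτ : τ ∈ Tkm k k) :
    Set.ncard {α : Equiv.Perm (Fin n) |
        (∀ σ ∈ Tkm k k, σ ≠ τ → Avoids σ α) ∧ ContainsExactlyOnce τ α}
      = (n + 1 - k) * (k - 1) ^ (n - k) := by
  obtain ⟨K, rfl⟩ : ∃ K, k = K + 1 := ⟨k - 1, by omega⟩
  have hτ0 : (τ 0 : ℕ) = K := (mem_Tkm_iff τ).1 hτ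
  rw [sets_eq τ hτ0, P1_card (by omega) τ hτ0 hkn]
  have h1 : n + 1 - (K + 1) = n - K := by omega
  have h2 : K + 1 - 1 = K := by omega
  have h3 : n - (K + 1) = n - K - 1 := by omega
  rw [h1, h2, h3]
end

section
/- For all 2 ≤ m ≤ k-1 with k ≤ n and any τ ∈ T_k^m, the number of permutations of {1,…,n} that avoid all patterns in T_k^m \ {τ} and contain τ exactly once equals (k-1)^(n-k). -/
open Finset Equiv
open scoped Classical

namespace Stmt11Aux

variable {k m n : ℕ}

lemma strictMono_fin_eq_id {N : ℕ} {f : Fin N → Fin N} (hf : StrictMono f) : f = id := by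
  have hsurj : Function.Surjective f :=
    (Finite.injective_iff_surjective).mp hf.injective
  have h := Subsingleton.elim (StrictMono.orderIsoOfSurjective f hf hsurj) (OrderIso.refl (Fin N))
  funext i
  calc f i = StrictMono.orderIsoOfSurjective f hf hsurj i := by
        rw [StrictMono.coe_orderIsoOfSurjective]
    _ = i := by rw [h]; rfl

/-- The rank of the `j`-th value of `g`. -/
def rk {N : ℕ} (g : Fin k → Fin N) (j : Fin k) : ℕ := #(univ.filter fun i => g i < g j)

lemma rk_lt {N : ℕ} (g : Fin k → Fin N) (j : Fin k) : rk g j < k := by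
  have hj : j ∉ (univ.filter fun i => g i < g j) := by simp
  have hss : (univ.filter fun i => g i < g j) ⊂ univ :=
    (Finset.ssubset_iff_of_subset (Finset.subset_univ _)).mpr ⟨j, Finset.mem_univ j, hj⟩
  simpa [rk] using Finset.card_lt_card hss

lemma rk_lt_rk {N : ℕ} {g : Fin k → Fin N} (hg : Function.Injective g) {i j : Fin k}
    (hij : g i < g j) : rk g i < rk g j := by
  apply Finset.card_lt_card
  refine (Finset.ssubset_iff_of_subset ?_).mpr ⟨i, by simp [hij], by simp⟩
  intro x hx
  simp only [Finset.mem_filter, Finset.mem_univ, true_and] at hx ⊢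
  exact hx.trans hij

lemma rk_inj {N : ℕ} {g : Fin k → Fin N} (hg : Function.Injective g) {i j : Fin k}
    (h : rk g i = rk g j) : i = j := by
  rcases lt_trichotomy (g i) (g j) with hlt | heq | hgt
  · exact absurd h (rk_lt_rk hg hlt).ne
  · exact hg heq
  · exact absurd h.symm (rk_lt_rk hg hgt).ne

/-- The pattern (order type) of an injective tuple. -/
noncomputable def patt {N : ℕ} (g : Fin k → Fin N) (hg : Function.Injective g) :
    Equiv.Perm (Fin k) :=
  Equiv.ofBijective (fun j => (⟨rk g j, rk_lt g j⟩ : Fin k))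
    ((Finite.injective_iff_bijective).mp fun i j h => rk_inj hg (by
      simpa [Fin.mk.injEq] using h))

lemma patt_lt_iff' {N : ℕ} {g : Fin k → Fin N} (hg : Function.Injective g) {i j : Fin k} :
    patt g hg i < patt g hg j ↔ rk g i < rk g j := Iff.rfl

lemma patt_lt_iff {N : ℕ} {g : Fin k → Fin N} (hg : Function.Injective g) {i j : Fin k} :
    patt g hg i < patt g hg j ↔ g i < g j := by
  rw [patt_lt_iff']
  constructor
  · intro h
    rcases lt_trichotomy (g i) (g j) with hlt | heq | hgt
    · exact hlt
    · exact absurd h (by rw [hg heq]; exact lt_irrefl _)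
    · exact absurd h (not_lt.mpr (rk_lt_rk hg hgt).le)
  · exact fun h => rk_lt_rk hg h

lemma pattOccursAt_patt {α : Equiv.Perm (Fin n)} {f : Fin k → Fin n} (hf : StrictMono f) :
    PattOccursAt (patt (α ∘ f) (α.injective.comp hf.injective)) α f :=
  ⟨hf, fun _ _ => patt_lt_iff _⟩

lemma perm_eq_of_lt_iff {σ σ' : Equiv.Perm (Fin k)}
    (h : ∀ i j, σ i < σ j ↔ σ' i < σ' j) : σ = σ' := by
  have hmono : StrictMono fun x => σ' (σ.symm x) := fun x y hxy =>
    (h (σ.symm x) (σ.symm y)).mp (by simpa using hxy)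
  have hid := strictMono_fin_eq_id hmono
  apply Equiv.ext
  intro i
  have h2 : σ' (σ.symm (σ i)) = σ i := congrFun hid (σ i)
  simpa using h2.symm

lemma rk_perm (σ : Equiv.Perm (Fin k)) (i : Fin k) : rk σ i = σ i := by
  have hset : (univ.filter fun j => σ j < σ i)
      = (Finset.Iio (σ i)).map ⟨σ.symm, σ.symm.injective⟩ := by
    ext x
    simp only [Finset.mem_filter, Finset.mem_univ, true_and, Finset.mem_map,
      Finset.mem_Iio, Function.Embedding.coeFn_mk]
    constructor
    · intro hx; exact ⟨σ x, hx, by simp⟩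
    · rintro ⟨a, ha, rfl⟩; simpa using ha
  rw [rk, hset, Finset.card_map, Fin.card_Iio]

lemma card_filter_occ [NeZero k] {σ : Equiv.Perm (Fin k)} {α : Equiv.Perm (Fin n)}
    {f : Fin k → Fin n} (h : PattOccursAt σ α f) :
    #(univ.filter fun j => α (f j) < α (f 0)) = (σ 0 : ℕ) := by
  have hset : (univ.filter fun j => α (f j) < α (f 0)) = univ.filter fun j => σ j < σ 0 :=
    Finset.filter_congr fun j _ => (h.2 j 0).symm
  rw [hset]
  exact rk_perm σ 0

/-- The key occurrence condition: a strictly increasing index sequence whose first value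
has rank `m` among the chosen values. -/
def POcc (m : ℕ) {k n : ℕ} [NeZero k] (α : Equiv.Perm (Fin n)) (f : Fin k → Fin n) : Prop :=
  StrictMono f ∧ #(univ.filter fun j => α (f j) < α (f 0)) = m - 1

/-- Reformulated membership condition. -/
def Cnd (m : ℕ) {k n : ℕ} [NeZero k] (τ : Equiv.Perm (Fin k)) (α : Equiv.Perm (Fin n)) : Prop :=
  (∃! f : Fin k → Fin n, POcc m α f) ∧ ∀ f : Fin k → Fin n, POcc m α f → PattOccursAt τ α f

lemma patt_mem_Tkm [NeZero k] (hm : 1 ≤ m) {α : Equiv.Perm (Fin n)} {f : Fin k → Fin n}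
    (hf : StrictMono f) (hcard : #(univ.filter fun j => α (f j) < α (f 0)) = m - 1) :
    patt (α ∘ f) (α.injective.comp hf.injective) ∈ Tkm k m := by
  intro i hi
  have hi0 : i = 0 := by
    ext
    rw [hi, Fin.val_zero]
  subst hi0
  have hval : (patt (α ∘ f) (α.injective.comp hf.injective) 0 : ℕ) = rk (α ∘ f) 0 := rfl
  rw [hval]
  have : rk (α ∘ f) 0 = m - 1 := hcard
  omega

lemma mem_iff_cnd [NeZero k] (hm : 1 ≤ m) {τ : Equiv.Perm (Fin k)} (hτ : (τ 0 : ℕ) + 1 = m)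
    (α : Equiv.Perm (Fin n)) :
    ((∀ σ ∈ Tkm k m, σ ≠ τ → Avoids σ α) ∧ ContainsExactlyOnce τ α) ↔ Cnd m τ α := by
  have hτ0 : (τ 0 : ℕ) = m - 1 := by omega
  constructor
  · rintro ⟨hav, f₀, hf₀, huniq⟩
    have key : ∀ f, POcc m α f → PattOccursAt τ α f := by
      rintro f ⟨hmono, hcard⟩
      have hocc : PattOccursAt (patt (α ∘ f) (α.injective.comp hmono.injective)) α f :=
        pattOccursAt_patt hmono
      have hmem := patt_mem_Tkm hm hmono hcard
      by_cases hστ : patt (α ∘ f) (α.injective.comp hmono.injective) = τ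
      · rwa [hστ] at hocc
      · exact absurd ⟨f, hocc⟩ (hav _ hmem hστ)
    refine ⟨⟨f₀, ⟨hf₀.1, by rw [card_filter_occ hf₀]; exact hτ0⟩, ?_⟩, key⟩
    intro f hf
    exact huniq f (key f hf)
  · rintro ⟨⟨f₀, hf₀, huniq⟩, key⟩
    constructor
    · intro σ hσ hστ hcon
      obtain ⟨f, hocc⟩ := hcon
      have h0 : (σ 0 : ℕ) + 1 = m := hσ 0 (Fin.val_zero k)
      have hP : POcc m α f := ⟨hocc.1, by rw [card_filter_occ hocc]; omega⟩
      have hoccτ := key f hP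
      exact hστ (perm_eq_of_lt_iff fun i j => (hocc.2 i j).trans (hoccτ.2 i j).symm)
    · refine ⟨f₀, key f₀ hf₀, ?_⟩
      intro f hocc
      exact huniq f ⟨hocc.1, by rw [card_filter_occ hocc, hτ0]⟩

/-! ### Insertion of a new first value -/

/-- Insert the value `v` at the front of the permutation `β`. -/
def ins {n : ℕ} (v : Fin (n+1)) (β : Equiv.Perm (Fin n)) : Equiv.Perm (Fin (n+1)) :=
  ((finSuccEquiv n).trans (Equiv.optionCongr β)).trans (finSuccEquiv' v).symm

@[simp] lemma ins_zero (v : Fin (n+1)) (β : Equiv.Perm (Fin n)) : ins v β 0 = v := by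
  simp [ins]

@[simp] lemma ins_succ (v : Fin (n+1)) (β : Equiv.Perm (Fin n)) (i : Fin n) :
    ins v β i.succ = v.succAbove (β i) := by
  simp [ins]

lemma ins_surj (α : Equiv.Perm (Fin (n+1))) : ∃ v β, ins v β = α := by
  set e : Option (Fin n) ≃ Option (Fin n) :=
    ((finSuccEquiv n).symm.trans (α : Equiv.Perm (Fin (n+1)))).trans (finSuccEquiv' (α 0)) with he
  refine ⟨α 0, e.removeNone, ?_⟩
  apply Equiv.ext
  intro x
  induction x using Fin.cases with
  | zero => simp
  | succ i =>
    rw [ins_succ]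
    obtain ⟨j, hj⟩ := Fin.exists_succAbove_eq
      (show α i.succ ≠ α 0 from fun h => (Fin.succ_ne_zero i) (α.injective h))
    have hsome : e (some i) = some j := by
      rw [he]
      simp only [Equiv.trans_apply, finSuccEquiv_symm_some]
      rw [← hj, finSuccEquiv'_succAbove]
    have h1 := Equiv.removeNone_some e ⟨j, hsome⟩
    have h2 : e.removeNone i = j := Option.some_injective _ (h1.trans hsome)
    rw [h2, hj]

lemma ins_inj : Function.Injective (fun p : Fin (n+1) × Equiv.Perm (Fin n) => ins p.1 p.2) := by
  rintro ⟨v, β⟩ ⟨v', β'⟩ h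
  simp only at h
  have hv : v = v' := by
    have := congrArg (fun σ : Equiv.Perm (Fin (n+1)) => σ 0) h
    simpa using this
  subst hv
  have hβ : β = β' := by
    apply Equiv.ext; intro i
    have := congrArg (fun σ : Equiv.Perm (Fin (n+1)) => σ i.succ) h
    simp only [ins_succ] at this
    exact Fin.succAbove_right_injective this
  rw [hβ]

lemma succAbove_lt_val {v : Fin (n+1)} {x : Fin n} :
    v.succAbove x < v ↔ (x : ℕ) < (v : ℕ) := by
  rw [Fin.succAbove_lt_iff_castSucc_lt]
  constructor <;> intro h <;> simpa [Fin.lt_def] using h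

section Lift

variable [NeZero k] {v : Fin (n+1)} {β : Equiv.Perm (Fin n)}

lemma strictMono_succ_comp {g : Fin k → Fin n} : StrictMono (Fin.succ ∘ g) ↔ StrictMono g := by
  constructor
  · intro h i j hij
    have := h hij
    simpa [Fin.succ_lt_succ_iff] using this
  · intro h i j hij
    exact Fin.succ_lt_succ_iff.mpr (h hij)

lemma pocc_lift {g : Fin k → Fin n} :
    POcc m (ins v β) (Fin.succ ∘ g) ↔ POcc m β g := by
  unfold POcc
  have hcard : (univ.filter fun j => ins v β ((Fin.succ ∘ g) j) < ins v β ((Fin.succ ∘ g) 0))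
      = univ.filter fun j => β (g j) < β (g 0) :=
    Finset.filter_congr fun j _ => by
      simp [Function.comp, Fin.succAbove_lt_succAbove_iff]
  rw [hcard, strictMono_succ_comp]

lemma pattocc_lift {g : Fin k → Fin n} {τ : Equiv.Perm (Fin k)} :
    PattOccursAt τ (ins v β) (Fin.succ ∘ g) ↔ PattOccursAt τ β g := by
  unfold PattOccursAt
  rw [strictMono_succ_comp]
  have hval : ∀ i j : Fin k,
      (ins v β ((Fin.succ ∘ g) i) < ins v β ((Fin.succ ∘ g) j)) ↔ (β (g i) < β (g j)) := by
    intro i j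
    simp [Function.comp, Fin.succAbove_lt_succAbove_iff]
  constructor
  · rintro ⟨h1, h2⟩
    exact ⟨h1, fun i j => (h2 i j).trans (hval i j)⟩
  · rintro ⟨h1, h2⟩
    exact ⟨h1, fun i j => (h2 i j).trans (hval i j).symm⟩

lemma exists_g_of_ne_zero {f : Fin k → Fin (n+1)} (hf : StrictMono f) (h0 : f 0 ≠ 0) :
    ∃ g : Fin k → Fin n, f = Fin.succ ∘ g := by
  have hne : ∀ j, f j ≠ 0 := by
    intro j h
    have hle : f 0 ≤ f j := hf.monotone (Fin.zero_le j)
    exact h0 (le_antisymm (h ▸ hle) (Fin.zero_le _))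
  refine ⟨fun j => (f j).pred (hne j), ?_⟩
  funext j
  simp [Fin.succ_pred]

lemma pocc_zero_case (hm : 1 ≤ m) (hmk : m ≤ k) {f : Fin k → Fin (n+1)} (hf : StrictMono f)
    (h0 : f 0 = 0) (hc : #(univ.filter fun j => ins v β (f j) < ins v β (f 0)) = m - 1) :
    m - 1 ≤ (v : ℕ) ∧ k - m ≤ n - (v : ℕ) := by
  set α := ins v β with hα
  have hα0 : α (f 0) = v := by rw [h0]; exact ins_zero v β
  have hinj : Function.Injective (fun j => α (f j)) := α.injective.comp hf.injective
  set D := univ.filter fun j => α (f j) < α (f 0) with hD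
  set E := univ.filter fun j => α (f 0) < α (f j) with hE
  have hDE : Disjoint D E := by
    rw [Finset.disjoint_left]
    intro j hjD hjE
    rw [hD, Finset.mem_filter] at hjD
    rw [hE, Finset.mem_filter] at hjE
    exact absurd hjE.2 (lt_asymm hjD.2)
  have hunion : D ∪ E = univ.erase 0 := by
    ext j
    simp only [hD, hE, Finset.mem_union, Finset.mem_filter, Finset.mem_univ, true_and,
      Finset.mem_erase, and_true]
    constructor
    · rintro (h | h) rfl <;> exact absurd h (lt_irrefl _)
    · intro hj
      exact lt_or_gt_of_ne fun hh : α (f j) = α (f 0) => hj (hf.injective (α.injective hh))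
  have hcDE : #D + #E = k - 1 := by
    rw [← Finset.card_union_of_disjoint hDE, hunion,
      Finset.card_erase_of_mem (Finset.mem_univ _), Finset.card_univ, Fintype.card_fin]
  have hcD : #D ≤ (v : ℕ) := by
    have h1 : #D ≤ #(Finset.Iio v) := by
      apply Finset.card_le_card_of_injOn (fun j => α (f j))
      · intro j hj
        rw [hD, Finset.mem_coe, Finset.mem_filter] at hj
        rw [Finset.mem_coe, Finset.mem_Iio]
        exact hα0 ▸ hj.2
      · exact fun a _ b _ h => hinj h
    simpa [Fin.card_Iio] using h1
  have hcE : #E ≤ n - (v : ℕ) := by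
    have h1 : #E ≤ #(Finset.Ioi v) := by
      apply Finset.card_le_card_of_injOn (fun j => α (f j))
      · intro j hj
        rw [hE, Finset.mem_coe, Finset.mem_filter] at hj
        rw [Finset.mem_coe, Finset.mem_Ioi]
        exact hα0 ▸ hj.2
      · exact fun a _ b _ h => hinj h
    have h2 : #(Finset.Ioi v) = n - (v : ℕ) := by
      rw [Fin.card_Ioi]
      omega
    omega
  omega

lemma card_filter_val_lt (N c : ℕ) :
    #(univ.filter fun x : Fin N => (x : ℕ) < c) = min c N := by
  rw [← Finset.card_range (min c N)]
  apply Finset.card_nbij (i := Fin.val)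
  · intro x hx
    rw [Finset.mem_coe, Finset.mem_filter] at hx
    rw [Finset.mem_coe, Finset.mem_range]
    exact lt_min hx.2 x.isLt
  · exact fun a _ b _ h => Fin.val_injective h
  · intro y hy
    simp only [Finset.coe_range, Set.mem_Iio] at hy
    have hyN : y < N := lt_of_lt_of_le hy (min_le_right _ _)
    refine ⟨⟨y, hyN⟩, ?_, rfl⟩
    simp only [Finset.coe_filter, Set.mem_setOf_eq, Finset.mem_univ, true_and]
    exact lt_of_lt_of_le hy (min_le_left _ _)

lemma build_pocc [NeZero k] (hm : 1 ≤ m) (hmk : m ≤ k) {v : Fin (n+1)} {β : Equiv.Perm (Fin n)}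
    {s t : Finset (Fin n)} (hs : ∀ i ∈ s, (β i : ℕ) < v) (ht : ∀ i ∈ t, (v : ℕ) ≤ β i)
    (hcs : #s = m - 1) (hct : #t = k - m) :
    ∃ f : Fin k → Fin (n+1), POcc m (ins v β) f ∧
      Set.range f = ↑(insert (0 : Fin (n+1)) ((s ∪ t).image Fin.succ)) := by
  have hk0 : 0 < k := Nat.pos_of_ne_zero (NeZero.ne k)
  have hst : Disjoint s t := Finset.disjoint_left.mpr fun i his hit => by
    have h1 := hs i his; have h2 := ht i hit; omega
  set u := s ∪ t with hu
  have hcu : #u = k - 1 := by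
    rw [hu, Finset.card_union_of_disjoint hst]; omega
  set w := insert (0 : Fin (n+1)) (u.image Fin.succ) with hw
  have h0w : (0 : Fin (n+1)) ∉ u.image Fin.succ := by
    simp only [Finset.mem_image, not_exists]
    rintro i ⟨_, hi⟩
    exact Fin.succ_ne_zero i hi
  have hcw : #w = k := by
    rw [hw, Finset.card_insert_of_notMem h0w,
      Finset.card_image_of_injective _ (Fin.succ_injective n)]
    omega
  set f := w.orderEmbOfFin hcw with hfdef
  have h00 : (0 : Fin k) = ⟨0, hk0⟩ := by
    ext; rw [Fin.val_zero]
  have hf0 : f 0 = 0 := by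
    rw [h00, hfdef, Finset.orderEmbOfFin_zero hcw hk0]
    apply le_antisymm
    · exact Finset.min'_le _ _ (Finset.mem_insert_self _ _)
    · exact Fin.zero_le _
  have hmemw : ∀ j, f j ∈ w := fun j => Finset.orderEmbOfFin_mem w hcw j
  have hrange : Set.range f = ↑w := Finset.range_orderEmbOfFin w hcw
  refine ⟨f, ⟨f.strictMono, ?_⟩, hrange⟩
  have hv0 : ins v β (f 0) = v := by rw [hf0]; exact ins_zero v β
  have hcard : (univ.filter fun j => ins v β (f j) < ins v β (f 0))
      = (univ.filter fun j => ins v β (f j) < v) := by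
    apply Finset.filter_congr
    intro j _
    rw [hv0]
  rw [hcard]
  have hbij : #(univ.filter fun j => ins v β (f j) < v) = #(s.image Fin.succ) := by
    apply Finset.card_nbij (i := fun j => f j)
    · intro j hj
      rw [Finset.mem_coe, Finset.mem_filter] at hj
      have hjw := hmemw j
      rw [hw, Finset.mem_insert] at hjw
      rcases hjw with h0 | hjm
      · rw [h0] at hj
        rw [ins_zero] at hj
        exact absurd hj.2 (lt_irrefl v)
      · rw [Finset.mem_image] at hjm
        obtain ⟨i, hiu, hfi⟩ := hjm
        rw [← hfi] at hj
        rw [ins_succ, succAbove_lt_val] at hj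
        have his : i ∈ s := by
          rw [hu, Finset.mem_union] at hiu
          rcases hiu with h | h
          · exact h
          · exact absurd hj.2 (not_lt.mpr (ht i h))
        rw [Finset.mem_coe, Finset.mem_image]
        exact ⟨i, his, hfi⟩
    · exact fun a _ b _ h => f.injective h
    · intro x hx
      simp only [Finset.coe_image, Set.mem_image, Finset.mem_coe] at hx
      obtain ⟨i, his, rfl⟩ := hx
      have hxw : i.succ ∈ w := by
        rw [hw, Finset.mem_insert, Finset.mem_image]
        exact Or.inr ⟨i, Finset.mem_union_left _ his, rfl⟩
      have : i.succ ∈ Set.range f := hrange ▸ (Finset.mem_coe.mpr hxw)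
      obtain ⟨j, hj⟩ := this
      refine ⟨j, ?_, hj⟩
      simp only [Finset.coe_filter, Set.mem_setOf_eq, Finset.mem_univ, true_and]
      rw [hj, ins_succ, succAbove_lt_val]
      exact hs i his
  rw [hbij, Finset.card_image_of_injective _ (Fin.succ_injective n), hcs]

lemma two_builds_contra [NeZero k] (hm : 1 ≤ m) (hmk : m ≤ k)
    {v : Fin (n+1)} {β : Equiv.Perm (Fin n)}
    (hC : ∃! f : Fin k → Fin (n+1), POcc m (ins v β) f)
    {s₁ t₁ s₂ t₂ : Finset (Fin n)}
    (hs₁ : ∀ i ∈ s₁, (β i : ℕ) < v) (ht₁ : ∀ i ∈ t₁, (v : ℕ) ≤ β i)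
    (hs₂ : ∀ i ∈ s₂, (β i : ℕ) < v) (ht₂ : ∀ i ∈ t₂, (v : ℕ) ≤ β i)
    (hcs₁ : #s₁ = m - 1) (hct₁ : #t₁ = k - m) (hcs₂ : #s₂ = m - 1) (hct₂ : #t₂ = k - m)
    (hne : s₁ ∪ t₁ ≠ s₂ ∪ t₂) : False := by
  obtain ⟨f₁, h₁, hr₁⟩ := build_pocc hm hmk hs₁ ht₁ hcs₁ hct₁
  obtain ⟨f₂, h₂, hr₂⟩ := build_pocc hm hmk hs₂ ht₂ hcs₂ hct₂
  obtain ⟨f₀, hf₀, huniq⟩ := hC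
  have e12 : f₁ = f₂ := (huniq f₁ h₁).trans (huniq f₂ h₂).symm
  apply hne
  have hcoe : (↑(insert (0 : Fin (n+1)) ((s₁ ∪ t₁).image Fin.succ)) : Set (Fin (n+1)))
      = ↑(insert (0 : Fin (n+1)) ((s₂ ∪ t₂).image Fin.succ)) := by
    rw [← hr₁, ← hr₂, e12]
  have hW : insert (0 : Fin (n+1)) ((s₁ ∪ t₁).image Fin.succ)
      = insert (0 : Fin (n+1)) ((s₂ ∪ t₂).image Fin.succ) := Finset.coe_injective hcoe
  have h0 : ∀ u : Finset (Fin n), (0 : Fin (n+1)) ∉ u.image Fin.succ := by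
    intro u
    simp only [Finset.mem_image, not_exists]
    rintro i ⟨_, hi⟩
    exact Fin.succ_ne_zero i hi
  have himg : (s₁ ∪ t₁).image Fin.succ = (s₂ ∪ t₂).image Fin.succ := by
    have h1 := congrArg (fun z => Finset.erase z (0 : Fin (n+1))) hW
    simpa [Finset.erase_insert_of_ne, Finset.erase_insert (h0 _)] using h1
  exact Finset.image_injective (Fin.succ_injective n) himg

lemma not_pocc_zero_ranks [NeZero k] (hm2 : 2 ≤ m) (hmk : m ≤ k - 1) (hkn : k ≤ n)
    {v : Fin (n+1)} {β : Equiv.Perm (Fin n)}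
    (hC : ∃! f : Fin k → Fin (n+1), POcc m (ins v β) f)
    (hv : m - 1 ≤ (v : ℕ)) (hn : k - m ≤ n - (v : ℕ)) : False := by
  have hk3 : 3 ≤ k := by omega
  have hvn : (v : ℕ) ≤ n := by omega
  set L := univ.filter fun i : Fin n => (β i : ℕ) < v with hL
  set H := univ.filter fun i : Fin n => ¬ ((β i : ℕ) < v) with hH
  have hLmem : ∀ i ∈ L, (β i : ℕ) < v := fun i hi => (Finset.mem_filter.mp hi).2
  have hHmem : ∀ i ∈ H, (v : ℕ) ≤ β i := fun i hi => not_lt.mp (Finset.mem_filter.mp hi).2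
  have hcL : #L = (v : ℕ) := by
    have h1 : #L = #(univ.filter fun x : Fin n => (x : ℕ) < v) := by
      apply Finset.card_nbij (i := fun i => β i)
      · intro i hi
        simp only [Finset.mem_coe, hL, Finset.mem_filter] at hi ⊢
        exact ⟨Finset.mem_univ _, hi.2⟩
      · exact fun a _ b _ h => β.injective h
      · intro x hx
        simp only [Finset.coe_filter, Set.mem_setOf_eq, Finset.mem_univ, true_and] at hx
        refine ⟨β.symm x, ?_, by simp⟩
        simp only [hL, Finset.coe_filter, Set.mem_setOf_eq, Finset.mem_univ, true_and]
        simpa using hx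
    rw [h1, card_filter_val_lt]
    omega
  have hcH : #H = n - (v : ℕ) := by
    have := Finset.card_filter_add_card_filter_not
      (s := (univ : Finset (Fin n))) (p := fun i : Fin n => (β i : ℕ) < v)
    rw [Finset.card_univ, Fintype.card_fin, ← hL, ← hH] at this
    omega
  by_cases hLm : m ≤ #L
  · obtain ⟨t, htH, hct⟩ := Finset.exists_subset_card_eq (show k - m ≤ #H by omega)
    obtain ⟨s', hsL, hcs'⟩ := Finset.exists_subset_card_eq hLm
    obtain ⟨a, ha, b, hb, hab⟩ := Finset.one_lt_card.mp (by omega : 1 < #s')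
    have hsub1 : s'.erase a ⊆ L := (Finset.erase_subset _ _).trans hsL
    have hsub2 : s'.erase b ⊆ L := (Finset.erase_subset _ _).trans hsL
    refine two_builds_contra (by omega) (by omega) hC
      (fun i hi => hLmem i (hsub1 hi)) (fun i hi => hHmem i (htH hi))
      (fun i hi => hLmem i (hsub2 hi)) (fun i hi => hHmem i (htH hi))
      (by rw [Finset.card_erase_of_mem ha, hcs']) hct
      (by rw [Finset.card_erase_of_mem hb, hcs']) hct ?_
    intro hEq
    have haIn : a ∈ s'.erase b ∪ t := Finset.mem_union_left _ (Finset.mem_erase.mpr ⟨hab, ha⟩)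
    rw [← hEq] at haIn
    rcases Finset.mem_union.mp haIn with h | h
    · exact (Finset.notMem_erase a s') h
    · have h1 := hLmem a (hsL ha)
      have h2 := hHmem a (htH h)
      omega
  · have hcLv : #L = m - 1 := by omega
    have hHk : k - m + 1 ≤ #H := by omega
    obtain ⟨s, hsL, hcs⟩ := Finset.exists_subset_card_eq (show m - 1 ≤ #L by omega)
    obtain ⟨t', htH, hct'⟩ := Finset.exists_subset_card_eq hHk
    obtain ⟨a, ha, b, hb, hab⟩ := Finset.one_lt_card.mp (by omega : 1 < #t')
    have hsub1 : t'.erase a ⊆ H := (Finset.erase_subset _ _).trans htH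
    have hsub2 : t'.erase b ⊆ H := (Finset.erase_subset _ _).trans htH
    refine two_builds_contra (by omega) (by omega) hC
      (fun i hi => hLmem i (hsL hi)) (fun i hi => hHmem i (hsub1 hi))
      (fun i hi => hLmem i (hsL hi)) (fun i hi => hHmem i (hsub2 hi))
      hcs (by rw [Finset.card_erase_of_mem ha, hct']; omega)
      hcs (by rw [Finset.card_erase_of_mem hb, hct']; omega) ?_
    intro hEq
    have haIn : a ∈ s ∪ t'.erase b := Finset.mem_union_right _ (Finset.mem_erase.mpr ⟨hab, ha⟩)
    rw [← hEq] at haIn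
    rcases Finset.mem_union.mp haIn with h | h
    · have h1 := hLmem a (hsL h)
      have h2 := hHmem a (htH ha)
      omega
    · exact (Finset.notMem_erase a t') h

end Lift


lemma cnd_ins_iff [NeZero k] (hm2 : 2 ≤ m) (hmk : m ≤ k - 1) (hkn : k ≤ n)
    {τ : Equiv.Perm (Fin k)} (v : Fin (n+1)) (β : Equiv.Perm (Fin n)) :
    Cnd m τ (ins v β) ↔ (((v : ℕ) < m - 1 ∨ n + m < (v : ℕ) + k) ∧ Cnd m τ β) := by
  have hk3 : 3 ≤ k := by omega
  have hvn : (v : ℕ) ≤ n := by omega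
  constructor
  · rintro ⟨hex, hpat⟩
    have hallowed : (v : ℕ) < m - 1 ∨ n + m < (v : ℕ) + k := by
      by_contra hna
      push_neg at hna
      exact not_pocc_zero_ranks hm2 hmk hkn hex (by omega) (by omega)
    have hnz : ∀ f : Fin k → Fin (n+1), POcc m (ins v β) f → f 0 ≠ 0 := by
      intro f hf h0
      have := pocc_zero_case (by omega) (by omega) hf.1 h0 hf.2
      omega
    obtain ⟨f₀, hf₀, huniq⟩ := hex
    obtain ⟨g₀, rfl⟩ := exists_g_of_ne_zero hf₀.1 (hnz _ hf₀)
    refine ⟨hallowed, ⟨g₀, pocc_lift.mp hf₀, ?_⟩, ?_⟩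
    · intro g hg
      have h1 := huniq _ (pocc_lift.mpr hg)
      funext i
      exact Fin.succ_injective n (congrFun h1 i)
    · intro g hg
      exact pattocc_lift.mp (hpat _ (pocc_lift.mpr hg))
  · rintro ⟨hallowed, ⟨⟨g₀, hg₀, huniq⟩, hpat⟩⟩
    have hnz : ∀ f : Fin k → Fin (n+1), POcc m (ins v β) f → f 0 ≠ 0 := by
      intro f hf h0
      have := pocc_zero_case (by omega) (by omega) hf.1 h0 hf.2
      omega
    constructor
    · refine ⟨Fin.succ ∘ g₀, pocc_lift.mpr hg₀, ?_⟩
      intro f hf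
      obtain ⟨g, rfl⟩ := exists_g_of_ne_zero hf.1 (hnz _ hf)
      rw [huniq g (pocc_lift.mp hf)]
    · intro f hf
      obtain ⟨g, rfl⟩ := exists_g_of_ne_zero hf.1 (hnz _ hf)
      exact pattocc_lift.mpr (hpat g (pocc_lift.mp hf))

lemma card_filter_allowed (hm2 : 2 ≤ m) (hmk : m ≤ k - 1) (hkn : k ≤ n) :
    #(univ.filter fun v : Fin (n+1) => (v : ℕ) < m - 1 ∨ n + m < (v : ℕ) + k) = k - 1 := by
  have hk3 : 3 ≤ k := by omega
  rw [Finset.filter_or]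
  have hdisj : Disjoint (univ.filter fun v : Fin (n+1) => (v : ℕ) < m - 1)
      (univ.filter fun v : Fin (n+1) => n + m < (v : ℕ) + k) := by
    rw [Finset.disjoint_left]
    intro v hv1 hv2
    rw [Finset.mem_filter] at hv1 hv2
    omega
  rw [Finset.card_union_of_disjoint hdisj]
  have h1 : #(univ.filter fun v : Fin (n+1) => (v : ℕ) < m - 1) = m - 1 := by
    rw [card_filter_val_lt]; omega
  have h2 : #(univ.filter fun v : Fin (n+1) => n + m < (v : ℕ) + k) = k - m := by
    have hEq : (univ.filter fun v : Fin (n+1) => n + m < (v : ℕ) + k)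
        = univ.filter fun v : Fin (n+1) => ¬ ((v : ℕ) < n + m + 1 - k) :=
      Finset.filter_congr fun v _ => by constructor <;> intro h <;> omega
    have := Finset.card_filter_add_card_filter_not
      (s := (univ : Finset (Fin (n+1)))) (p := fun v : Fin (n+1) => (v : ℕ) < n + m + 1 - k)
    rw [Finset.card_univ, Fintype.card_fin] at this
    have h3 := card_filter_val_lt (n+1) (n + m + 1 - k)
    rw [hEq]
    omega
  omega

lemma card_step [NeZero k] (hm2 : 2 ≤ m) (hmk : m ≤ k - 1) (hkn : k ≤ n)
    {τ : Equiv.Perm (Fin k)} :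
    #(univ.filter fun α : Equiv.Perm (Fin (n+1)) => Cnd m τ α)
      = (k - 1) * #(univ.filter fun β : Equiv.Perm (Fin n) => Cnd m τ β) := by
  have hbij : #((univ : Finset (Fin (n+1) × Equiv.Perm (Fin n))).filter
        fun p => ((p.1 : ℕ) < m - 1 ∨ n + m < (p.1 : ℕ) + k) ∧ Cnd m τ p.2)
      = #(univ.filter fun α : Equiv.Perm (Fin (n+1)) => Cnd m τ α) := by
    apply Finset.card_nbij (i := fun p => ins p.1 p.2)
    · intro p hp
      simp only [Finset.mem_coe, Finset.mem_filter] at hp ⊢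
      exact ⟨Finset.mem_univ _, (cnd_ins_iff hm2 hmk hkn p.1 p.2).mpr hp.2⟩
    · exact fun a _ b _ h => ins_inj h
    · intro α hα
      simp only [Finset.coe_filter, Set.mem_setOf_eq, Finset.mem_univ, true_and] at hα
      obtain ⟨v, β, rfl⟩ := ins_surj α
      refine ⟨(v, β), ?_, rfl⟩
      simp only [Finset.coe_filter, Set.mem_setOf_eq, Finset.mem_univ, true_and]
      exact (cnd_ins_iff hm2 hmk hkn v β).mp hα
  rw [← hbij]
  have hprod : ((univ : Finset (Fin (n+1) × Equiv.Perm (Fin n))).filter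
        fun p => ((p.1 : ℕ) < m - 1 ∨ n + m < (p.1 : ℕ) + k) ∧ Cnd m τ p.2)
      = (univ.filter fun v : Fin (n+1) => (v : ℕ) < m - 1 ∨ n + m < (v : ℕ) + k)
        ×ˢ (univ.filter fun β : Equiv.Perm (Fin n) => Cnd m τ β) := by
    ext p
    simp only [Finset.mem_filter, Finset.mem_univ, true_and, Finset.mem_product]
  rw [hprod, Finset.card_product, card_filter_allowed hm2 hmk hkn]

lemma cnd_self [NeZero k] (hm : 1 ≤ m) {τ : Equiv.Perm (Fin k)} (hτ : (τ 0 : ℕ) + 1 = m)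
    (α : Equiv.Perm (Fin k)) : Cnd m τ α ↔ α = τ := by
  constructor
  · rintro ⟨⟨f₀, hf₀, -⟩, hpat⟩
    have hocc := hpat f₀ hf₀
    rw [strictMono_fin_eq_id hf₀.1] at hocc
    exact (perm_eq_of_lt_iff fun i j => hocc.2 i j).symm
  · rintro rfl
    have hPid : POcc m α (id : Fin k → Fin k) := by
      refine ⟨strictMono_id, ?_⟩
      have h1 : #(univ.filter fun j => α (id j) < α (id 0)) = rk α 0 := rfl
      rw [h1, rk_perm]
      omega
    refine ⟨⟨id, hPid, ?_⟩, ?_⟩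
    · intro f hf
      exact strictMono_fin_eq_id hf.1
    · intro f hf
      rw [strictMono_fin_eq_id hf.1]
      exact ⟨strictMono_id, fun i j => Iff.rfl⟩

lemma card_cnd [NeZero k] (hm2 : 2 ≤ m) (hmk : m ≤ k - 1)
    {τ : Equiv.Perm (Fin k)} (hτ : (τ 0 : ℕ) + 1 = m) (d : ℕ) :
    #(univ.filter fun α : Equiv.Perm (Fin (k + d)) => Cnd m τ α) = (k - 1) ^ d := by
  induction d with
  | zero =>
    have hEq : (univ.filter fun α : Equiv.Perm (Fin (k + 0)) => Cnd m τ α)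
        = {(τ : Equiv.Perm (Fin (k + 0)))} := by
      ext α
      rw [Finset.mem_filter, Finset.mem_singleton]
      simp only [Finset.mem_univ, true_and]
      exact cnd_self (by omega) hτ α
    rw [hEq]
    simp
  | succ d ih =>
    have h1 : #(univ.filter fun α : Equiv.Perm (Fin (k + (d + 1))) => Cnd m τ α)
        = (k - 1) * #(univ.filter fun β : Equiv.Perm (Fin (k + d)) => Cnd m τ β) :=
      card_step hm2 hmk (Nat.le_add_right k d)
    rw [h1, ih, pow_succ]
    ring

end Stmt11Aux

theorem stmt11 (k m n : ℕ) (hm2 : 2 ≤ m) (hmk : m ≤ k - 1) (hkn : k ≤ n)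
    (τ : Equiv.Perm (Fin k)) (hτ : τ ∈ Tkm k m) :
    Set.ncard {α : Equiv.Perm (Fin n) |
        (∀ σ ∈ Tkm k m, σ ≠ τ → Avoids σ α) ∧ ContainsExactlyOnce τ α}
      = (k - 1) ^ (n - k) := by
  classical
  have hk3 : 3 ≤ k := by omega
  haveI : NeZero k := ⟨by omega⟩
  have hτ0 : (τ 0 : ℕ) + 1 = m := hτ 0 (Fin.val_zero k)
  obtain ⟨d, rfl⟩ : ∃ d, n = k + d := ⟨n - k, by omega⟩
  have hset : {α : Equiv.Perm (Fin (k + d)) |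
        (∀ σ ∈ Tkm k m, σ ≠ τ → Avoids σ α) ∧ ContainsExactlyOnce τ α}
      = ↑(Finset.univ.filter fun α : Equiv.Perm (Fin (k + d)) => Stmt11Aux.Cnd m τ α) := by
    ext α
    simp only [Set.mem_setOf_eq, Finset.coe_filter, Finset.mem_univ, true_and]
    exact Stmt11Aux.mem_iff_cnd (by omega) hτ0 α
  rw [hset, Set.ncard_coe_finset, Stmt11Aux.card_cnd hm2 hmk hτ0 d]
  congr 1
  omega
end

section
/- The number of permutations of {1,…,n} (n ≥ 3) that avoid the pattern 213 and contain the pattern 231 exactly once equals 2^(n-3). -/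
/-!
A permutation of length at least 4 that avoids 213 and contains 231 exactly once starts with its
minimum or its maximum. Otherwise, avoiding 213 forces every entry above the first one to precede
every entry below it, and each such pair completes a 231 with the first entry; with at least
three further entries there are at least two such pairs. Conversely, prepending a new minimum or maximum
creates no occurrence of 213 or 231, because the first letter of both patterns is the middle
value. So the count doubles at each length from 3 on, and at length 3 only 231 itself qualifies.
-/

open Equiv Function

lemma existsUnique_iff_of_injective {α β : Type*} {e : α → β} (he : Injective e) {P : β → Prop}
    (hP : ∀ b, P b → b ∈ Set.range e) : (∃! b, P b) ↔ ∃! a, P (e a) := by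
  constructor
  · rintro ⟨b, hb, hu⟩
    obtain ⟨a, rfl⟩ := hP b hb
    exact ⟨a, hb, fun a' ha' => he (hu _ ha')⟩
  · rintro ⟨a, ha, hu⟩
    refine ⟨e a, ha, fun b hb => ?_⟩
    obtain ⟨a', rfl⟩ := hP b hb
    rw [hu a' hb]

section Patterns

variable {β γ : Type*} [LinearOrder β] [LinearOrder γ] {n : ℕ}

def Has213 (f : Fin n → β) : Prop :=
  ∃ i j l, i < j ∧ j < l ∧ f j < f i ∧ f i < f l

def IsOcc231 (f : Fin n → β) (t : Fin n × Fin n × Fin n) : Prop :=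
  t.1 < t.2.1 ∧ t.2.1 < t.2.2 ∧ f t.2.2 < f t.1 ∧ f t.1 < f t.2.1

def avoiding213Once231 (n : ℕ) : Set (Perm (Fin n)) :=
  {α | ¬ Has213 ⇑α ∧ ∃! t, IsOcc231 ⇑α t}

lemma has213_comp {g : β → γ} (hg : StrictMono g) (f : Fin n → β) :
    Has213 (g ∘ f) ↔ Has213 f := by
  simp only [Has213, comp_apply, hg.lt_iff_lt]

lemma isOcc231_comp {g : β → γ} (hg : StrictMono g) (f : Fin n → β) (t : Fin n × Fin n × Fin n) :
    IsOcc231 (g ∘ f) t ↔ IsOcc231 f t := by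
  simp only [IsOcc231, comp_apply, hg.lt_iff_lt]

section Cons

variable {v : β} {h : Fin n → β}

lemma has213_cons (hv : ∀ i j, ¬ (h i < v ∧ v < h j)) :
    Has213 (Fin.cons v h : Fin (n + 1) → β) ↔ Has213 h := by
  simp only [Has213, Fin.exists_fin_succ, Fin.cons_zero, Fin.cons_succ, Fin.succ_lt_succ_iff,
    Fin.not_lt_zero, Fin.succ_pos, false_and, exists_false, false_or, true_and, hv, and_false]

lemma existsUnique_isOcc231_cons (hv : ∀ i j, ¬ (h i < v ∧ v < h j)) :
    (∃! t, IsOcc231 (Fin.cons v h : Fin (n + 1) → β) t) ↔ ∃! t, IsOcc231 h t := by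
  have he : Injective
      (Prod.map Fin.succ (Prod.map Fin.succ Fin.succ) : _ → Fin (n + 1) × _ × _) :=
    (Fin.succ_injective n).prodMap ((Fin.succ_injective n).prodMap (Fin.succ_injective n))
  rw [existsUnique_iff_of_injective he]
  · simp only [IsOcc231, Prod.map_fst, Prod.map_snd, Fin.cons_succ, Fin.succ_lt_succ_iff]
  · rintro ⟨i, j, l⟩ ⟨hij, hjl, hli, hij'⟩
    obtain ⟨j, rfl⟩ := Fin.exists_succ_eq.mpr (Fin.pos_iff_ne_zero.mp (i.zero_le.trans_lt hij))
    obtain ⟨l, rfl⟩ :=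
      Fin.exists_succ_eq.mpr (Fin.pos_iff_ne_zero.mp (i.zero_le.trans_lt (hij.trans hjl)))
    induction i using Fin.cases with
    | zero => exact absurd ⟨hli, hij'⟩ (hv l j)
    | succ i => exact ⟨(i, j, l), rfl⟩

end Cons

lemma cons_mem_avoiding213Once231_iff {σ : Perm (Fin n)} {α : Perm (Fin (n + 1))}
    {v : Fin (n + 1)} {g : Fin n → Fin (n + 1)} (hg : StrictMono g) (hα : ⇑α = Fin.cons v (g ∘ σ))
    (hv : ∀ i j, ¬ (g i < v ∧ v < g j)) :
    α ∈ avoiding213Once231 (n + 1) ↔ σ ∈ avoiding213Once231 n := by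
  have hv' : ∀ i j, ¬ ((g ∘ σ) i < v ∧ v < (g ∘ σ) j) := fun i j => hv (σ i) (σ j)
  simp only [avoiding213Once231, Set.mem_ofPred_eq, hα, has213_cons hv',
    existsUnique_isOcc231_cons hv', has213_comp hg, isOcc231_comp hg]

noncomputable def prependMin (σ : Perm (Fin n)) : Perm (Fin (n + 1)) :=
  .ofBijective (Fin.cons 0 (Fin.succ ∘ σ)) <| Finite.injective_iff_bijective.mp <|
    Fin.cons_injective_iff.mpr
      ⟨fun ⟨_, hi⟩ => Fin.succ_ne_zero _ hi, (Fin.succ_injective n).comp σ.injective⟩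

noncomputable def prependMax (σ : Perm (Fin n)) : Perm (Fin (n + 1)) :=
  .ofBijective (Fin.cons (Fin.last n) (Fin.castSucc ∘ σ)) <| Finite.injective_iff_bijective.mp <|
    Fin.cons_injective_iff.mpr
      ⟨fun ⟨_, hi⟩ => Fin.castSucc_ne_last _ hi, (Fin.castSucc_injective n).comp σ.injective⟩

lemma prependMin_injective : Injective (prependMin : Perm (Fin n) → _) := fun σ τ h =>
  Equiv.ext fun i => Fin.succ_injective n (by simpa [prependMin] using DFunLike.congr_fun h i.succ)

lemma prependMax_injective : Injective (prependMax : Perm (Fin n) → _) := fun σ τ h =>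
  Equiv.ext fun i => Fin.castSucc_injective n
    (by simpa [prependMax] using DFunLike.congr_fun h i.succ)

lemma prependMin_mem_iff {σ : Perm (Fin n)} :
    prependMin σ ∈ avoiding213Once231 (n + 1) ↔ σ ∈ avoiding213Once231 n :=
  cons_mem_avoiding213Once231_iff Fin.strictMono_succ rfl fun _ _ h => Fin.not_lt_zero _ h.1

lemma prependMax_mem_iff {σ : Perm (Fin n)} :
    prependMax σ ∈ avoiding213Once231 (n + 1) ↔ σ ∈ avoiding213Once231 n :=
  cons_mem_avoiding213Once231_iff Fin.strictMono_castSucc rfl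
    fun _ _ h => (Fin.castSucc_lt_last _).not_gt h.2

lemma exists_prependMin_eq {α : Perm (Fin (n + 1))} (h : α 0 = 0) : ∃ σ, prependMin σ = α := by
  have hne : ∀ i : Fin n, α i.succ ≠ 0 :=
    fun i hi => Fin.succ_ne_zero i (α.injective (hi.trans h.symm))
  refine ⟨.ofBijective (fun i : Fin n => (α i.succ).pred (hne i))
    (Finite.injective_iff_bijective.mp fun i j hij => ?_), ?_⟩
  · exact Fin.succ_injective _ (α.injective (Fin.pred_inj.mp hij))
  · ext i
    induction i using Fin.cases <;> simp [prependMin, h]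

lemma exists_prependMax_eq {α : Perm (Fin (n + 1))} (h : α 0 = Fin.last n) :
    ∃ σ, prependMax σ = α := by
  have hne : ∀ i : Fin n, α i.succ ≠ Fin.last n :=
    fun i hi => Fin.succ_ne_zero i (α.injective (hi.trans h.symm))
  refine ⟨.ofBijective (fun i : Fin n => (α i.succ).castPred (hne i))
    (Finite.injective_iff_bijective.mp fun i j hij => ?_), ?_⟩
  · exact Fin.succ_injective _ (α.injective (Fin.castPred_inj.mp hij))
  · ext i
    induction i using Fin.cases <;> simp [prependMax, h]

lemma apply_zero_eq_zero_or_last {α : Perm (Fin (n + 1))} (hn : 3 ≤ n)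
    (hα : α ∈ avoiding213Once231 (n + 1)) : α 0 = 0 ∨ α 0 = Fin.last n := by
  obtain ⟨h213, hu⟩ := hα
  by_contra! ⟨h0, hlast⟩
  have occ : ∀ x y, α x < α 0 → α 0 < α y → IsOcc231 α (0, y, x) := by
    intro x y hx hy
    have hy0 : 0 < y := Fin.pos_iff_ne_zero.mpr (by rintro rfl; exact hy.false)
    have hx0 : 0 < x := Fin.pos_iff_ne_zero.mpr (by rintro rfl; exact hx.false)
    refine ⟨hy0, lt_of_not_ge fun hxy : x ≤ y => ?_, hx, hy⟩
    exact h213 ⟨0, x, y, hx0, hxy.lt_of_ne (ne_of_apply_ne α (hx.trans hy).ne), hx, hy⟩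
  set p := α.symm 0
  set q := α.symm (Fin.last n)
  have hp : α p < α 0 := by simpa [p] using Fin.pos_iff_ne_zero.mpr h0
  have hq : α 0 < α q := by simpa [q] using Fin.lt_last_iff_ne_last.mpr hlast
  obtain ⟨r, -, hr⟩ := Finset.exists_mem_notMem_of_card_lt_card
    (s := {0, p, q}) (t := Finset.univ) ((Finset.card_le_three).trans_lt (by simp; omega))
  simp only [Finset.mem_insert, Finset.mem_singleton, not_or] at hr
  obtain ⟨hr0, hrp, hrq⟩ := hr
  rcases (α.injective.ne hr0).lt_or_gt with hr' | hr'
  · exact hrp (congrArg (·.2.2) (hu.unique (occ r q hr' hq) (occ p q hp hq)))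
  · exact hrq (congrArg (·.2.1) (hu.unique (occ p r hp hr') (occ p q hp hq)))

lemma avoiding213Once231_succ (hn : 3 ≤ n) :
    avoiding213Once231 (n + 1) =
      prependMin '' avoiding213Once231 n ∪ prependMax '' avoiding213Once231 n := by
  ext α
  constructor
  · intro hα
    rcases apply_zero_eq_zero_or_last hn hα with h | h
    · obtain ⟨σ, rfl⟩ := exists_prependMin_eq h
      exact Or.inl ⟨σ, prependMin_mem_iff.mp hα, rfl⟩
    · obtain ⟨σ, rfl⟩ := exists_prependMax_eq h
      exact Or.inr ⟨σ, prependMax_mem_iff.mp hα, rfl⟩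
  · rintro (⟨σ, hσ, rfl⟩ | ⟨σ, hσ, rfl⟩)
    exacts [prependMin_mem_iff.mpr hσ, prependMax_mem_iff.mpr hσ]

lemma ncard_avoiding213Once231_succ (hn : 3 ≤ n) :
    (avoiding213Once231 (n + 1)).ncard = 2 * (avoiding213Once231 n).ncard := by
  have hdisj : Disjoint (prependMin '' avoiding213Once231 n)
      (prependMax '' avoiding213Once231 n) := by
    refine Set.disjoint_left.mpr ?_
    rintro _ ⟨σ, -, rfl⟩ ⟨τ, -, h⟩
    have h0 := DFunLike.congr_fun h 0
    simp only [prependMax, prependMin, ofBijective_apply, Fin.cons_zero,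
      Fin.last_eq_zero_iff] at h0
    omega
  rw [avoiding213Once231_succ hn, Set.ncard_union_eq hdisj,
    Set.ncard_image_of_injective _ prependMin_injective,
    Set.ncard_image_of_injective _ prependMax_injective, two_mul]

lemma avoiding213Once231_three : avoiding213Once231 3 = {finRotate 3} := by
  ext α
  simp only [Set.mem_singleton_iff]
  constructor
  · rintro ⟨-, ⟨t, ⟨h1, h2, h3, h4⟩, -⟩⟩
    have forced : ∀ t : Fin 3 × Fin 3 × Fin 3, t.1 < t.2.1 → t.2.1 < t.2.2 → t = (0, 1, 2) := by
      decide
    obtain rfl := forced t h1 h2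
    have values : ∀ a b c : Fin 3, c < a → a < b → a = 1 ∧ b = 2 ∧ c = 0 := by decide
    obtain ⟨h0, h1, h2⟩ := values _ _ _ h3 h4
    refine Equiv.ext fun i => ?_
    fin_cases i
    exacts [h0, h1, h2]
  · rintro rfl
    refine ⟨by unfold Has213; decide, (0, 1, 2), by unfold IsOcc231; decide, ?_⟩
    unfold IsOcc231
    decide

end Patterns

theorem stmt12 (n : ℕ) (hn : 3 ≤ n) :
    Set.ncard {α : Equiv.Perm (Fin n) |
        (¬ ∃ i j l : Fin n, i < j ∧ j < l ∧ α j < α i ∧ α i < α l) ∧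
        (∃! t : Fin n × Fin n × Fin n,
          t.1 < t.2.1 ∧ t.2.1 < t.2.2 ∧ α t.2.2 < α t.1 ∧ α t.1 < α t.2.1)}
      = 2 ^ (n - 3) := by
  change (avoiding213Once231 n).ncard = _
  obtain ⟨k, rfl⟩ := Nat.exists_eq_add_of_le' hn
  clear hn
  induction k with
  | zero => simp [avoiding213Once231_three]
  | succ k ih =>
    rw [show k + 1 + 3 = k + 3 + 1 by omega, ncard_avoiding213Once231_succ (by omega), ih]
    simp [pow_succ, mul_comm]
end

section
/- For k ≥ 3 and n ≥ k, suppose α ∈ S_n avoids all patterns in T_k^1 \ {τ} and contains τ ∈ T_k^1 exactly once. Then α(1) ≥ n - k + 1; i.e., the first entry of α cannot be at most n-k. -/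
/-! If `α(1) ≤ n - k`, at least `k` entries of `α` exceed `α(1)`, and all of them lie to its right.
Prefixing the first entry to any `k - 1` of them gives an occurrence of a pattern of `T_k^1`, which
must be `τ` since `α` avoids the others; choosing the `k - 1` entries in two ways yields two
occurrences of `τ`. -/

lemma exists_perm_lt_iff_lt {k : ℕ} {β : Type*} [LinearOrder β] {v : Fin k → β}
    (hv : Function.Injective v) : ∃ σ : Equiv.Perm (Fin k), ∀ i j, σ i < σ j ↔ v i < v j := by
  have hsorted : StrictMono (v ∘ Tuple.sort v) :=
    (Tuple.monotone_sort v).strictMono_of_injective (hv.comp (Tuple.sort v).injective)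
  refine ⟨(Tuple.sort v)⁻¹, fun i j => ?_⟩
  rw [← hsorted.lt_iff_lt]
  simp

lemma exists_pattOccursAt {k n : ℕ} (α : Equiv.Perm (Fin n)) {f : Fin k → Fin n}
    (hf : StrictMono f) : ∃ σ, PattOccursAt σ α f :=
  (exists_perm_lt_iff_lt (α.injective.comp hf.injective)).imp fun _ hσ => ⟨hf, hσ⟩

lemma PattOccursAt.mem_Tkm_one {m n : ℕ} {σ : Equiv.Perm (Fin (m + 1))} {α : Equiv.Perm (Fin n)}
    {f : Fin (m + 1) → Fin n} (h : PattOccursAt σ α f) (hmin : ∀ i, α (f 0) ≤ α (f i)) :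
    σ ∈ Tkm (m + 1) 1 := by
  have hσ0 : σ 0 = 0 :=
    le_antisymm (by simpa using (h.2 (σ⁻¹ 0) 0).not.mpr (hmin _).not_gt) (Fin.zero_le _)
  intro i hi
  rw [show i = 0 from Fin.ext hi, hσ0, Fin.val_zero]

lemma card_filter_lt_apply {n : ℕ} (α : Equiv.Perm (Fin n)) (p : Fin n) :
    (Finset.univ.filter fun j => α p < α j).card = n - 1 - α p := by
  rw [← Fin.card_Ioi, ← Finset.card_map α.toEmbedding]
  congr 1
  ext j
  simp only [Finset.mem_filter, Finset.mem_univ, true_and, Finset.mem_map_equiv,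
    Equiv.apply_symm_apply, Finset.mem_Ioi]

lemma pattOccursAt_of_avoids_Tkm_one {m n : ℕ} {τ : Equiv.Perm (Fin (m + 1))}
    {α : Equiv.Perm (Fin n)} (h1 : ∀ σ ∈ Tkm (m + 1) 1, σ ≠ τ → Avoids σ α)
    {f : Fin (m + 1) → Fin n} (hf : StrictMono f) (hmin : ∀ i, α (f 0) ≤ α (f i)) :
    PattOccursAt τ α f := by
  obtain ⟨σ, hσ⟩ := exists_pattOccursAt α hf
  obtain rfl : σ = τ := by_contra fun hne => h1 σ (hσ.mem_Tkm_one hmin) hne ⟨f, hσ⟩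
  exact hσ

lemma Finset.exists_ne_strictMono_mem {β : Type*} [LinearOrder β] {m : ℕ} (hm : 0 < m)
    {S : Finset β} (hS : m + 1 ≤ S.card) :
    ∃ g₁ g₂ : Fin m → β, g₁ ≠ g₂ ∧ StrictMono g₁ ∧ StrictMono g₂ ∧
      (∀ i, g₁ i ∈ S) ∧ ∀ i, g₂ i ∈ S := by
  set e := S.orderEmbOfCardLe hS
  refine ⟨e ∘ Fin.castSucc, e ∘ Fin.succ, fun h => ?_, e.strictMono.comp Fin.strictMono_castSucc,
    e.strictMono.comp Fin.strictMono_succ, fun i => S.orderEmbOfCardLe_mem hS _,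
    fun i => S.orderEmbOfCardLe_mem hS _⟩
  have := e.injective (congrFun h ⟨0, hm⟩)
  simp [Fin.ext_iff] at this

theorem stmt13 (k n : ℕ) (hk : 3 ≤ k) (hkn : k ≤ n)
    (τ : Equiv.Perm (Fin k))
    (α : Equiv.Perm (Fin n))
    (h1 : ∀ σ ∈ Tkm k 1, σ ≠ τ → Avoids σ α)
    (h2 : ContainsExactlyOnce τ α) :
    n - k + 1 ≤ (α ⟨0, by omega⟩ : ℕ) + 1 := by
  obtain ⟨m, rfl⟩ : ∃ m, k = m + 1 := ⟨k - 1, by omega⟩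
  set p : Fin n := ⟨0, by omega⟩
  by_contra hlt
  set S := Finset.univ.filter fun j => α p < α j
  have hcard : m + 1 ≤ S.card := by rw [card_filter_lt_apply]; omega
  have hpS : ∀ j ∈ S, p < j := fun j hj =>
    (Fin.le_iff_val_le_val.2 (Nat.zero_le j) : p ≤ j).lt_of_ne fun h =>
      (Finset.mem_filter.1 hj).2.ne (congrArg α h)
  have hocc : ∀ g : Fin m → Fin n, StrictMono g → (∀ i, g i ∈ S) →
      PattOccursAt τ α (Fin.cons p g) := fun g hg hgS =>
    pattOccursAt_of_avoids_Tkm_one h1 (Fin.strictMono_cons.2 ⟨fun i => hpS _ (hgS i), hg⟩)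
      (Fin.cases le_rfl fun i => (Finset.mem_filter.1 (hgS i)).2.le)
  obtain ⟨g₁, g₂, hne, hg₁, hg₂, hS₁, hS₂⟩ := S.exists_ne_strictMono_mem (by omega) hcard
  exact hne (Fin.cons_right_injective p (h2.unique (hocc g₁ hg₁ hS₁) (hocc g₂ hg₂ hS₂)))
end

section
/- For 2 ≤ m ≤ k-1, k ≤ n-1 (i.e. n ≥ k+1), if α ∈ S_n avoids all patterns in T_k^m \ {τ} and contains τ ∈ T_k^m exactly once, then either α(1) ≤ m-1 or α(1) ≥ n-k+m+1. -/
/-- The rank (as a natural number) of the `i`-th entry of `v`. -/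
def rkCard {k n : ℕ} (v : Fin k → Fin n) (i : Fin k) : ℕ :=
  (Finset.univ.filter (fun j => v j < v i)).card

lemma rkCard_lt {k n : ℕ} (v : Fin k → Fin n) (i : Fin k) : rkCard v i < k := by
  have h : (Finset.univ.filter (fun j => v j < v i)) ⊂ Finset.univ := by
    refine Finset.ssubset_univ_iff.mpr ?_
    intro h
    have := (Finset.mem_filter.mp (h ▸ Finset.mem_univ i)).2
    exact lt_irrefl _ this
  have := Finset.card_lt_card h
  simpa [rkCard] using this

lemma rkCard_lt_of_lt {k n : ℕ} {v : Fin k → Fin n} {i j : Fin k}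
    (hij : v i < v j) : rkCard v i < rkCard v j := by
  have hsub : (Finset.univ.filter (fun l => v l < v i))
      ⊆ (Finset.univ.filter (fun l => v l < v j)) := by
    intro x hx
    simp only [Finset.mem_filter, Finset.mem_univ, true_and] at hx ⊢
    exact lt_trans hx hij
  refine Finset.card_lt_card ((Finset.ssubset_iff_of_subset hsub).mpr ⟨i, ?_, ?_⟩)
  · simp [hij]
  · simp

lemma rkCard_lt_iff {k n : ℕ} {v : Fin k → Fin n} (hv : Function.Injective v)
    (i j : Fin k) : rkCard v i < rkCard v j ↔ v i < v j := by
  constructor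
  · intro h
    rcases lt_trichotomy (v i) (v j) with h' | h' | h'
    · exact h'
    · exact absurd h (by rw [hv h']; exact lt_irrefl _)
    · exact absurd (lt_trans (rkCard_lt_of_lt h') h) (lt_irrefl _)
  · exact rkCard_lt_of_lt

lemma rk_injective {k n : ℕ} {v : Fin k → Fin n} (hv : Function.Injective v) :
    Function.Injective (fun i => (⟨rkCard v i, rkCard_lt v i⟩ : Fin k)) := by
  intro i j hij
  simp only [Fin.mk.injEq] at hij
  by_contra hne
  rcases lt_trichotomy (v i) (v j) with h' | h' | h'
  · exact absurd hij (Nat.ne_of_lt (rkCard_lt_of_lt h'))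
  · exact hne (hv h')
  · exact absurd hij.symm (Nat.ne_of_lt (rkCard_lt_of_lt h'))

/-- From a suitable `k`-element subset of positions containing `0`, with exactly
`m-1` of the values below `α 0`, we get an occurrence of some pattern in `T_k^m`. -/
lemma occ_of_subset {k m n : ℕ} (hk : 0 < k) (hn : 0 < n) (hm : 1 ≤ m)
    (α : Equiv.Perm (Fin n)) (S : Finset (Fin n)) (hS : S.card = k)
    (h0 : (⟨0, hn⟩ : Fin n) ∈ S)
    (hfilt : (S.filter (fun x => α x < α ⟨0, hn⟩)).card = m - 1) :
    ∃ σ : Equiv.Perm (Fin k), σ ∈ Tkm k m ∧ PattOccursAt σ α (S.orderEmbOfFin hS) := by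
  set f := S.orderEmbOfFin hS with hf
  have hfz : f ⟨0, hk⟩ = ⟨0, hn⟩ := by
    rw [hf, Finset.orderEmbOfFin_zero hS hk]
    refine le_antisymm (Finset.min'_le _ _ h0) ?_
    exact Fin.mk_le_of_le_val (Nat.zero_le _)
  set v : Fin k → Fin n := fun i => α (f i) with hv
  have hvinj : Function.Injective v := fun i j h =>
    f.injective (α.injective h)
  refine ⟨Equiv.ofBijective _ ((Finite.injective_iff_bijective).mp (rk_injective hvinj)), ?_, ?_, ?_⟩
  · intro i hi
    have hi0 : i = ⟨0, hk⟩ := Fin.ext hi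
    subst hi0
    have : rkCard v ⟨0, hk⟩ = m - 1 := by
      rw [← hfilt]
      refine Finset.card_bij (fun j _ => f j) ?_ ?_ ?_
      · intro j hj
        simp only [Finset.mem_filter, Finset.mem_univ, true_and] at hj ⊢
        refine ⟨Finset.orderEmbOfFin_mem S hS j, ?_⟩
        rw [← hfz]; exact hj
      · intro j₁ _ j₂ _ h; exact f.injective h
      · intro x hx
        simp only [Finset.mem_filter] at hx
        have : x ∈ Set.range f := by
          rw [hf, Finset.range_orderEmbOfFin]; exact hx.1
        obtain ⟨j, hj⟩ := this
        refine ⟨j, ?_, hj⟩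
        simp only [Finset.mem_filter, Finset.mem_univ, true_and]
        rw [hv]; simp only [hfz, hj]; exact hx.2
    simp only [Equiv.ofBijective_apply, this]
    omega
  · exact (S.orderEmbOfFin hS).strictMono
  · intro i j
    simp only [Equiv.ofBijective_apply]
    rw [Fin.mk_lt_mk]
    exact rkCard_lt_iff hvinj i j

theorem stmt14 (k m n : ℕ) (hm2 : 2 ≤ m) (hmk : m ≤ k - 1) (hkn : k + 1 ≤ n)
    (τ : Equiv.Perm (Fin k)) (hτ : τ ∈ Tkm k m)
    (α : Equiv.Perm (Fin n))
    (h1 : ∀ σ ∈ Tkm k m, σ ≠ τ → Avoids σ α)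
    (h2 : ContainsExactlyOnce τ α) :
    (α ⟨0, by omega⟩ : ℕ) + 1 ≤ m - 1 ∨ n - k + m + 1 ≤ (α ⟨0, by omega⟩ : ℕ) + 1 := by
  have hk : 0 < k := by omega
  have hn : 0 < n := by omega
  by_contra hcon
  push_neg at hcon
  obtain ⟨hc1, hc2⟩ := hcon
  set z : Fin n := ⟨0, hn⟩ with hz
  set a : ℕ := (α z : ℕ) with ha
  -- bounds: m - 1 ≤ a ≤ n - k + m - 1
  have hab1 : m - 1 ≤ a := by omega
  have hab2 : a ≤ n - k + m - 1 := by omega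
  -- counts of positions below/above
  set A : Finset (Fin n) := Finset.univ.filter (fun x => α x < α z) with hA
  set B : Finset (Fin n) := Finset.univ.filter (fun x => α z < α x) with hB
  have hcardA : A.card = a := by
    rw [hA, ha, ← Fin.card_Iio (α z)]
    refine Finset.card_bij (fun x _ => α x) ?_ ?_ ?_
    · intro x hx; simp only [Finset.mem_filter, Finset.mem_univ, true_and] at hx
      simpa using hx
    · intro x₁ _ x₂ _ h; exact α.injective h
    · intro y hy
      refine ⟨α.symm y, ?_, by simp⟩
      simp only [Finset.mem_filter, Finset.mem_univ, true_and, Equiv.apply_symm_apply]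
      simpa using hy
  have hcardB : B.card = n - 1 - a := by
    rw [hB, ha, ← Fin.card_Ioi (α z)]
    refine Finset.card_bij (fun x _ => α x) ?_ ?_ ?_
    · intro x hx; simp only [Finset.mem_filter, Finset.mem_univ, true_and] at hx
      simpa using hx
    · intro x₁ _ x₂ _ h; exact α.injective h
    · intro y hy
      refine ⟨α.symm y, ?_, by simp⟩
      simp only [Finset.mem_filter, Finset.mem_univ, true_and, Equiv.apply_symm_apply]
      simpa using hy
  have hzA : z ∉ A := by simp [hA]
  have hzB : z ∉ B := by simp [hB]
  have hAB : ∀ x ∈ A, x ∉ B := by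
    intro x hxA hxB
    rw [hA, Finset.mem_filter] at hxA
    rw [hB, Finset.mem_filter] at hxB
    exact absurd (lt_trans hxA.2 hxB.2) (lt_irrefl _)
  -- choose L ⊆ A with card m-1, H ⊆ B with card k-m
  obtain ⟨L, hLA, hLcard⟩ := Finset.exists_subset_card_eq (show m - 1 ≤ A.card by omega)
  obtain ⟨H, hHB, hHcard⟩ := Finset.exists_subset_card_eq
    (show k - m ≤ B.card by omega)
  -- generic: a subset of this shape gives an occurrence of τ
  have key : ∀ (L' H' : Finset (Fin n)), L' ⊆ A → H' ⊆ B → L'.card = m - 1 →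
      H'.card = k - m → ∃ hS : (insert z (L' ∪ H')).card = k,
      PattOccursAt τ α ((insert z (L' ∪ H')).orderEmbOfFin hS) := by
    intro L' H' hL'A hH'B hL'c hH'c
    have hdisj : Disjoint L' H' := by
      rw [Finset.disjoint_left]
      intro x hxL hxH
      exact hAB x (hL'A hxL) (hH'B hxH)
    have hznotin : z ∉ L' ∪ H' := by
      rw [Finset.mem_union]
      rintro (h | h)
      · exact hzA (hL'A h)
      · exact hzB (hH'B h)
    have hScard : (insert z (L' ∪ H')).card = k := by
      rw [Finset.card_insert_of_notMem hznotin, Finset.card_union_of_disjoint hdisj]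
      omega
    have hfiltS : ((insert z (L' ∪ H')).filter (fun x => α x < α z)).card = m - 1 := by
      have : (insert z (L' ∪ H')).filter (fun x => α x < α z) = L' := by
        ext x
        simp only [Finset.mem_filter, Finset.mem_insert, Finset.mem_union]
        constructor
        · rintro ⟨h | h | h, hlt⟩
          · exact absurd (h ▸ hlt) (lt_irrefl _)
          · exact h
          · have := hH'B h
            rw [hB, Finset.mem_filter] at this
            exact absurd (lt_trans hlt this.2) (lt_irrefl _)
        · intro h
          have := hL'A h
          rw [hA, Finset.mem_filter] at this
          exact ⟨Or.inr (Or.inl h), this.2⟩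
      rw [this, hL'c]
    obtain ⟨σ, hσT, hσocc⟩ := occ_of_subset hk hn (by omega) α _ hScard
      (Finset.mem_insert_self z _) hfiltS
    refine ⟨hScard, ?_⟩
    have hστ : σ = τ := by
      by_contra hne
      exact h1 σ hσT hne ⟨_, hσocc⟩
    exact hστ ▸ hσocc
  -- two distinct such sets
  have main : ∀ (S₁ S₂ : Finset (Fin n)), S₁ ≠ S₂ →
      (∃ hS : S₁.card = k, PattOccursAt τ α (S₁.orderEmbOfFin hS)) →
      (∃ hS : S₂.card = k, PattOccursAt τ α (S₂.orderEmbOfFin hS)) → False := by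
    rintro S₁ S₂ hne ⟨hS₁, ho₁⟩ ⟨hS₂, ho₂⟩
    obtain ⟨f, _, huniq⟩ := h2
    have e₁ := huniq _ ho₁
    have e₂ := huniq _ ho₂
    apply hne
    have : Set.range ⇑(S₁.orderEmbOfFin hS₁) = Set.range ⇑(S₂.orderEmbOfFin hS₂) := by
      rw [e₁, e₂]
    rw [Finset.range_orderEmbOfFin, Finset.range_orderEmbOfFin] at this
    exact_mod_cast Finset.coe_injective this
  -- case split on which side has room
  rcases (show m - 1 < a ∨ a < n - 1 - (k - m) by omega) with hcase | hcase
  · -- modify L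
    have : ¬ A ⊆ L := fun h => absurd (Finset.card_le_card h) (by omega)
    obtain ⟨x, hxA, hxL⟩ := Finset.not_subset.mp this
    have hLne : L.Nonempty := Finset.card_pos.mp (by omega)
    obtain ⟨y, hyL⟩ := hLne
    set L' : Finset (Fin n) := insert x (L.erase y) with hL'
    have hL'A : L' ⊆ A := by
      rw [hL']
      exact Finset.insert_subset hxA ((Finset.erase_subset _ _).trans hLA)
    have hL'c : L'.card = m - 1 := by
      rw [hL', Finset.card_insert_of_notMem (fun h => hxL (Finset.mem_of_mem_erase h)),
        Finset.card_erase_of_mem hyL]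
      omega
    refine main (insert z (L ∪ H)) (insert z (L' ∪ H)) ?_ ?_ ?_
    · intro h
      have hx2 : x ∈ insert z (L' ∪ H) := by
        simp [hL', Finset.mem_insert, Finset.mem_union]
      rw [← h] at hx2
      simp only [Finset.mem_insert, Finset.mem_union] at hx2
      rcases hx2 with h' | h' | h'
      · exact hzA (h' ▸ hxA)
      · exact hxL h'
      · exact hAB x hxA (hHB h')
    · exact key L H hLA hHB hLcard hHcard
    · exact key L' H hL'A hHB hL'c hHcard
  · -- modify H
    have : ¬ B ⊆ H := fun h => absurd (Finset.card_le_card h) (by omega)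
    obtain ⟨x, hxB, hxH⟩ := Finset.not_subset.mp this
    have hHne : H.Nonempty := Finset.card_pos.mp (by omega)
    obtain ⟨y, hyH⟩ := hHne
    set H' : Finset (Fin n) := insert x (H.erase y) with hH'
    have hH'B : H' ⊆ B := by
      rw [hH']
      exact Finset.insert_subset hxB ((Finset.erase_subset _ _).trans hHB)
    have hH'c : H'.card = k - m := by
      rw [hH', Finset.card_insert_of_notMem (fun h => hxH (Finset.mem_of_mem_erase h)),
        Finset.card_erase_of_mem hyH]
      omega
    refine main (insert z (L ∪ H)) (insert z (L ∪ H')) ?_ ?_ ?_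
    · intro h
      have hx2 : x ∈ insert z (L ∪ H') := by
        simp [hH', Finset.mem_insert, Finset.mem_union]
      rw [← h] at hx2
      simp only [Finset.mem_insert, Finset.mem_union] at hx2
      rcases hx2 with h' | h' | h'
      · exact hzB (h' ▸ hxB)
      · exact hAB x (hLA h') hxB
      · exact hxH h'
    · exact key L H hLA hHB hLcard hHcard
    · exact key L H' hLA hH'B hLcard hH'c
end

section
/- For 2 < k ≤ n and 1 ≤ m ≤ k, the map inserting a new maximal value at the front, α ↦ (n+1, α(1), …, α(n)), sends S_n(T_k^m) into S_{n+1}(T_k^m) injectively when m ≤ k-1; more generally, for each h ∈ {1,…,m-1} ∪ {n+m-k+2,…,n+1}, prepending the value h (and shifting values ≥ h up by one) maps S_n(T_k^m) into S_{n+1}(T_k^m). -/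
/-
An occurrence of `τ ∈ T_k^m` in `γ = f_h(β)` either avoids the first position, and then it is an
occurrence in the tail of `γ`, which is order-isomorphic to `β`; or it starts there, and then the
first entry `h` of `γ` has at least `m - 1` smaller and `k - m` larger entries, i.e.
`m ≤ h ≤ n + m - k + 1`, which the allowed values of `h` exclude.
-/

namespace Fin

variable {k n : ℕ} {g : Fin k → Fin n}

lemma le_val_of_strictMono (hg : StrictMono g) (i : Fin k) : (i : ℕ) ≤ g i := by
  obtain ⟨i, hi⟩ := i
  induction i with
  | zero => exact Nat.zero_le _
  | succ i ih =>
    have hlt : g ⟨i, by omega⟩ < g ⟨i + 1, hi⟩ := hg (Fin.mk_lt_mk.mpr i.lt_succ_self)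
    have := ih (by omega)
    rw [Fin.lt_def] at hlt
    simp only at this ⊢
    omega

lemma val_add_le_of_strictMono (hg : StrictMono g) (i : Fin k) : (g i : ℕ) + k ≤ i + n := by
  have hrev : StrictMono (Fin.rev ∘ g ∘ Fin.rev) := fun a b hab => by
    simpa only [Function.comp_apply, Fin.rev_lt_rev] using hg (Fin.rev_lt_rev.mpr hab)
  have := le_val_of_strictMono hrev (Fin.rev i)
  simp only [Function.comp_apply, Fin.rev_rev, Fin.val_rev] at this
  have := (g i).isLt
  omega

lemma eq_zero_at_zero_or_eq_succ_comp {f : Fin k → Fin (n + 1)} (hf : StrictMono f) :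
    (∃ i : Fin k, (i : ℕ) = 0 ∧ f i = 0) ∨ ∃ g : Fin k → Fin n, f = Fin.succ ∘ g := by
  by_cases hzero : ∃ i, f i = 0
  · obtain ⟨i, hi⟩ := hzero
    refine .inl ⟨i, ?_, hi⟩
    by_contra hne
    have h0i : (⟨0, i.pos⟩ : Fin k) < i := lt_def.mpr (Nat.pos_of_ne_zero hne)
    exact not_lt_zero _ (hi ▸ hf h0i)
  · push Not at hzero
    exact .inr ⟨fun j => (f j).pred (hzero j), funext fun j => (succ_pred _ _).symm⟩

end Fin

namespace PattOccursAt

variable {k n : ℕ} {τ : Equiv.Perm (Fin k)}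

lemma strictMono_comp_symm {α : Equiv.Perm (Fin n)} {f : Fin k → Fin n}
    (hf : PattOccursAt τ α f) : StrictMono (α ∘ f ∘ τ.symm) := fun a b hab => by
  simpa only [Function.comp_apply, Equiv.apply_symm_apply, ← hf.2] using hab

lemma val_le_val_apply {α : Equiv.Perm (Fin n)} {f : Fin k → Fin n} (hf : PattOccursAt τ α f)
    (i : Fin k) : (τ i : ℕ) ≤ α (f i) := by
  simpa using Fin.le_val_of_strictMono hf.strictMono_comp_symm (τ i)

lemma val_apply_add_le {α : Equiv.Perm (Fin n)} {f : Fin k → Fin n} (hf : PattOccursAt τ α f)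
    (i : Fin k) : (α (f i) : ℕ) + k ≤ τ i + n := by
  simpa using Fin.val_add_le_of_strictMono hf.strictMono_comp_symm (τ i)

lemma of_succ {β : Equiv.Perm (Fin n)} {γ : Equiv.Perm (Fin (n + 1))} {g : Fin k → Fin n}
    (hγβ : ∀ i j, γ i.succ < γ j.succ ↔ β i < β j) (hg : PattOccursAt τ γ (Fin.succ ∘ g)) :
    PattOccursAt τ β g :=
  ⟨fun _ _ hab => Fin.succ_lt_succ_iff.mp (hg.1 hab), fun i j => (hg.2 i j).trans (hγβ (g i) (g j))⟩

end PattOccursAt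

theorem stmt16 (k m n : ℕ) :
    (∀ h : ℕ, ((1 ≤ h ∧ h ≤ m - 1) ∨ (n + m - k + 2 ≤ h ∧ h ≤ n + 1)) →
      ∀ β : Equiv.Perm (Fin n), (∀ τ ∈ Tkm k m, Avoids τ β) →
      ∀ γ : Equiv.Perm (Fin (n + 1)),
        ((γ ⟨0, by omega⟩ : ℕ) + 1 = h ∧
          ∀ i : Fin n, (γ i.succ : ℕ) =
            if (β i : ℕ) + 1 < h then (β i : ℕ) else (β i : ℕ) + 1) →
        ∀ τ ∈ Tkm k m, Avoids τ γ)
    ∧ (m ≤ k - 1 →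
        ∀ β₁ β₂ : Equiv.Perm (Fin n), ∀ γ₁ γ₂ : Equiv.Perm (Fin (n + 1)),
        (∀ τ ∈ Tkm k m, Avoids τ β₁) → (∀ τ ∈ Tkm k m, Avoids τ β₂) →
        ((γ₁ ⟨0, by omega⟩ : ℕ) + 1 = n + 1 ∧
          ∀ i : Fin n, (γ₁ i.succ : ℕ) = (β₁ i : ℕ)) →
        ((γ₂ ⟨0, by omega⟩ : ℕ) + 1 = n + 1 ∧
          ∀ i : Fin n, (γ₂ i.succ : ℕ) = (β₂ i : ℕ)) →
        γ₁ = γ₂ → β₁ = β₂) := by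
  refine ⟨?_, ?_⟩
  · rintro h hh β hβ γ ⟨hγ0, hγs⟩ τ hτ ⟨f, hf⟩
    have hγβ : ∀ i j, γ i.succ < γ j.succ ↔ β i < β j := fun i j => by
      rw [Fin.lt_def, Fin.lt_def, hγs, hγs]
      split_ifs <;> omega
    rcases Fin.eq_zero_at_zero_or_eq_succ_comp hf.1 with ⟨i, hi, hfi⟩ | ⟨g, rfl⟩
    · have hτi := hτ i hi
      have hlow := hf.val_le_val_apply i
      have hhigh := hf.val_apply_add_le i
      have hγ0' : (γ 0 : ℕ) + 1 = h := hγ0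
      rw [hfi] at hlow hhigh
      omega
    · exact hβ τ hτ ⟨g, hf.of_succ hγβ⟩
  · rintro - β₁ β₂ γ₁ γ₂ - - ⟨-, h₁⟩ ⟨-, h₂⟩ rfl
    exact Equiv.ext fun i => Fin.ext ((h₁ i).symm.trans (h₂ i))
end

section
/- For n ≥ 3, the number of permutations of {1,…,n} avoiding both 123 and 132 equals 2^(n-1), and the number avoiding both 213 and 231 also equals 2^(n-1). -/
/-!
Write `consPerm v σ` for the permutation of `Fin (n + 1)` that starts with `v` and continues with
`σ`, relabelled by `v.succAbove`; every permutation arises this way exactly once. Both pattern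
classes are characterised entrywise: avoiding `{123, 132}` means no entry has two larger entries
after it, avoiding `{213, 231}` means every entry lies below or above all later ones. Since the
entries after `v` take every other value, `consPerm v σ` lies in the class iff `σ` does and `v` is
one of two values (`n - 1` or `n`, resp. `0` or `n`), so the class doubles at every length.
-/

open Equiv

namespace PatternAvoidance

variable {n : ℕ}

theorem forall_lt_lt_fin_succ {P : Fin (n + 1) → Fin (n + 1) → Fin (n + 1) → Prop} :
    (∀ i j l, i < j → j < l → P i j l) ↔
      (∀ j l : Fin n, j < l → P 0 j.succ l.succ) ∧
        ∀ i j l : Fin n, i < j → j < l → P i.succ j.succ l.succ := by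
  refine ⟨fun h => ⟨fun j l hjl => h _ _ _ (Fin.succ_pos j) (Fin.succ_lt_succ_iff.2 hjl),
    fun i j l hij hjl => h _ _ _ (Fin.succ_lt_succ_iff.2 hij) (Fin.succ_lt_succ_iff.2 hjl)⟩, ?_⟩
  rintro ⟨h0, hs⟩ i j l hij hjl
  cases j using Fin.cases with
  | zero => exact absurd hij (Fin.not_lt_zero i)
  | succ j =>
    cases l using Fin.cases with
    | zero => exact absurd hjl (Fin.not_lt_zero _)
    | succ l =>
      cases i using Fin.cases with
      | zero => exact h0 j l (Fin.succ_lt_succ_iff.1 hjl)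
      | succ i => exact hs i j l (Fin.succ_lt_succ_iff.1 hij) (Fin.succ_lt_succ_iff.1 hjl)

theorem forall_lt_apply_iff_forall_ne (σ : Perm (Fin n)) {R : Fin n → Fin n → Prop}
    (hR : ∀ w w', R w w' → R w' w) : (∀ j l, j < l → R (σ j) (σ l)) ↔ ∀ w w', w ≠ w' → R w w' := by
  refine ⟨fun h w w' hw => ?_, fun h j l hjl => h _ _ (σ.injective.ne hjl.ne)⟩
  obtain hlt | hgt := lt_or_gt_of_ne (σ.symm.injective.ne hw)
  · simpa using h _ _ hlt
  · simpa using hR _ _ (h _ _ hgt)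

noncomputable def consPerm (v : Fin (n + 1)) (σ : Perm (Fin n)) : Perm (Fin (n + 1)) :=
  Equiv.ofBijective (Fin.cons v (v.succAbove ∘ σ)) <| Finite.injective_iff_bijective.mp <|
    Fin.cons_injective_iff.mpr
      ⟨fun ⟨_, hw⟩ => v.succAbove_ne _ hw, Fin.succAbove_right_injective.comp σ.injective⟩

@[simp] theorem consPerm_zero (v : Fin (n + 1)) (σ : Perm (Fin n)) : consPerm v σ 0 = v := rfl

@[simp] theorem consPerm_succ (v : Fin (n + 1)) (σ : Perm (Fin n)) (i : Fin n) :
    consPerm v σ i.succ = v.succAbove (σ i) := rfl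

theorem consPerm_bijective :
    Function.Bijective fun p : Fin (n + 1) × Perm (Fin n) => consPerm p.1 p.2 := by
  refine (Fintype.bijective_iff_injective_and_card _).mpr ⟨fun ⟨v, σ⟩ ⟨w, τ⟩ h => ?_, ?_⟩
  · have hv : v = w := by simpa using congr($h 0)
    subst hv
    refine Prod.ext rfl (Equiv.ext fun i => Fin.succAbove_right_injective (p := v) ?_)
    simpa using congr($h i.succ)
  · simp [Fintype.card_perm, Nat.factorial_succ]

theorem ncard_eq_mul_of_consPerm_mem_iff {T : Set (Perm (Fin (n + 1)))} {H : Set (Fin (n + 1))}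
    {S : Set (Perm (Fin n))} (h : ∀ v σ, consPerm v σ ∈ T ↔ v ∈ H ∧ σ ∈ S) :
    T.ncard = H.ncard * S.ncard := by
  have hT : T = (fun p : Fin (n + 1) × Perm (Fin n) => consPerm p.1 p.2) '' H ×ˢ S := by
    ext α
    obtain ⟨⟨v, σ⟩, rfl⟩ := consPerm_bijective.2 α
    rw [consPerm_bijective.1.mem_set_image]
    exact h v σ
  rw [hT, Set.ncard_image_of_injective _ consPerm_bijective.1, Set.ncard_prod]

theorem ncard_eq_two_pow_pred {S : ∀ n, Set (Perm (Fin n))} (H : ∀ n, Set (Fin (n + 1)))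
    (hS : ∀ n v σ, consPerm v σ ∈ S (n + 1) ↔ v ∈ H n ∧ σ ∈ S n) (hS0 : S 0 = Set.univ)
    (hH0 : (H 0).ncard = 1) (hH : ∀ n, (H (n + 1)).ncard = 2) (n : ℕ) :
    (S n).ncard = 2 ^ (n - 1) := by
  have hsucc : ∀ n, (S (n + 1)).ncard = 2 ^ n := by
    intro n
    induction n with
    | zero => simp [ncard_eq_mul_of_consPerm_mem_iff (hS 0), hS0, hH0]
    | succ n ih => rw [ncard_eq_mul_of_consPerm_mem_iff (hS _), hH, ih, pow_succ']
  cases n with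
  | zero => simp [hS0]
  | succ n => exact hsucc n

def atMostOneLargerLater (n : ℕ) : Set (Perm (Fin n)) :=
  {α | ∀ i j l, i < j → j < l → ¬(α i < α j ∧ α i < α l)}

def extremalInSuffix (n : ℕ) : Set (Perm (Fin n)) :=
  {α | ∀ i j l, i < j → j < l → (α i < α j ↔ α i < α l)}

theorem forall_ne_not_le_and_le_iff (v : Fin (n + 1)) :
    (∀ w w' : Fin n, w ≠ w' → ¬(v ≤ w.castSucc ∧ v ≤ w'.castSucc)) ↔ n ≤ v + 1 := by
  refine ⟨fun h => ?_, fun h w w' hw ⟨hvw, hvw'⟩ => ?_⟩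
  · by_contra! hv
    exact h ⟨v, by omega⟩ ⟨v + 1, hv⟩ (by simp [Fin.ext_iff]) ⟨le_rfl, by simp [Fin.le_def]⟩
  · rw [Fin.le_def] at hvw hvw'
    have := Fin.val_ne_of_ne hw
    simp only [Fin.val_castSucc] at hvw hvw'
    omega

theorem forall_ne_le_iff_le_iff (v : Fin (n + 1)) :
    (∀ w w' : Fin n, w ≠ w' → (v ≤ w.castSucc ↔ v ≤ w'.castSucc)) ↔ v = 0 ∨ v = Fin.last n := by
  refine ⟨fun h => ?_, ?_⟩
  · by_contra! hv
    have h0 : 0 < (v : ℕ) := Fin.pos_iff_ne_zero.2 hv.1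
    have hn : (v : ℕ) < n := Fin.val_lt_last hv.2
    have hv0 : v ≤ Fin.castSucc ⟨0, by omega⟩ :=
      (h _ ⟨v, hn⟩ (by simp [Fin.ext_iff]; omega)).2 (by simp)
    simp only [Fin.le_def, Fin.val_castSucc] at hv0
    omega
  · rintro (rfl | rfl) w w' - <;> simp

theorem consPerm_mem_atMostOneLargerLater (v : Fin (n + 1)) (σ : Perm (Fin n)) :
    consPerm v σ ∈ atMostOneLargerLater (n + 1) ↔
      v ∈ {v : Fin (n + 1) | n ≤ v + 1} ∧ σ ∈ atMostOneLargerLater n := by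
  simp only [atMostOneLargerLater, Set.mem_ofPred_eq]
  rw [forall_lt_lt_fin_succ]
  simp only [consPerm_zero, consPerm_succ, Fin.succAbove_lt_succAbove_iff,
    Fin.lt_succAbove_iff_le_castSucc]
  rw [forall_lt_apply_iff_forall_ne σ (R := fun w w' => ¬(v ≤ w.castSucc ∧ v ≤ w'.castSucc))
    (fun _ _ => by tauto), forall_ne_not_le_and_le_iff]

theorem consPerm_mem_extremalInSuffix (v : Fin (n + 1)) (σ : Perm (Fin n)) :
    consPerm v σ ∈ extremalInSuffix (n + 1) ↔
      v ∈ ({0, Fin.last n} : Set (Fin (n + 1))) ∧ σ ∈ extremalInSuffix n := by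
  simp only [extremalInSuffix, Set.mem_ofPred_eq]
  rw [forall_lt_lt_fin_succ]
  simp only [consPerm_zero, consPerm_succ, Fin.succAbove_lt_succAbove_iff,
    Fin.lt_succAbove_iff_le_castSucc]
  rw [forall_lt_apply_iff_forall_ne σ (R := fun w w' => v ≤ w.castSucc ↔ v ≤ w'.castSucc)
    (fun _ _ => Iff.symm), forall_ne_le_iff_le_iff]
  rfl

theorem ncard_atMostOneLargerLater (n : ℕ) : (atMostOneLargerLater n).ncard = 2 ^ (n - 1) := by
  refine ncard_eq_two_pow_pred (fun n => {v : Fin (n + 1) | n ≤ v + 1})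
    (fun _ => consPerm_mem_atMostOneLargerLater) ?_ ?_ (fun n => ?_) n
  · exact Set.eq_univ_of_forall fun _ i => i.elim0
  · simp
  · rw [← Set.ncard_pair (a := Fin.last (n + 1)) (b := (Fin.last n).castSucc)
      (Fin.castSucc_lt_last _).ne']
    congr 1
    ext v
    simp only [Set.mem_ofPred_eq, Set.mem_insert_iff, Set.mem_singleton_iff, Fin.ext_iff,
      Fin.val_last, Fin.val_castSucc]
    omega

theorem ncard_extremalInSuffix (n : ℕ) : (extremalInSuffix n).ncard = 2 ^ (n - 1) := by
  refine ncard_eq_two_pow_pred (fun n => {0, Fin.last n})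
    (fun _ => consPerm_mem_extremalInSuffix) ?_ ?_ (fun _ => Set.ncard_pair Fin.last_pos.ne) n
  · exact Set.eq_univ_of_forall fun _ i => i.elim0
  · simp

theorem setOf_avoids_123_132 (n : ℕ) :
    {α : Perm (Fin n) |
        (¬ ∃ i j l : Fin n, i < j ∧ j < l ∧ α i < α j ∧ α j < α l) ∧
        (¬ ∃ i j l : Fin n, i < j ∧ j < l ∧ α i < α l ∧ α l < α j)} = atMostOneLargerLater n := by
  ext α
  refine ⟨fun ⟨h123, h132⟩ i j l hij hjl ⟨hj, hl⟩ => ?_, fun h => ⟨?_, ?_⟩⟩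
  · obtain hjl' | hlj := lt_or_gt_of_ne (α.injective.ne hjl.ne)
    exacts [h123 ⟨i, j, l, hij, hjl, hj, hjl'⟩, h132 ⟨i, j, l, hij, hjl, hl, hlj⟩]
  · exact fun ⟨i, j, l, hij, hjl, hj, hjl'⟩ => h i j l hij hjl ⟨hj, hj.trans hjl'⟩
  · exact fun ⟨i, j, l, hij, hjl, hl, hlj⟩ => h i j l hij hjl ⟨hl.trans hlj, hl⟩

theorem setOf_avoids_213_231 (n : ℕ) :
    {α : Perm (Fin n) |
        (¬ ∃ i j l : Fin n, i < j ∧ j < l ∧ α j < α i ∧ α i < α l) ∧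
        (¬ ∃ i j l : Fin n, i < j ∧ j < l ∧ α l < α i ∧ α i < α j)} = extremalInSuffix n := by
  ext α
  refine ⟨fun ⟨h213, h231⟩ i j l hij hjl => ⟨fun hj => ?_, fun hl => ?_⟩, fun h => ⟨?_, ?_⟩⟩
  · refine (lt_or_gt_of_ne (α.injective.ne (hij.trans hjl).ne)).resolve_right fun hl => ?_
    exact h231 ⟨i, j, l, hij, hjl, hl, hj⟩
  · refine (lt_or_gt_of_ne (α.injective.ne hij.ne)).resolve_right fun hj => ?_
    exact h213 ⟨i, j, l, hij, hjl, hj, hl⟩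
  · exact fun ⟨i, j, l, hij, hjl, hj, hl⟩ => hj.asymm ((h i j l hij hjl).2 hl)
  · exact fun ⟨i, j, l, hij, hjl, hl, hj⟩ => hl.asymm ((h i j l hij hjl).1 hj)

end PatternAvoidance

theorem stmt18_general (n : ℕ) :
    Set.ncard {α : Equiv.Perm (Fin n) |
        (¬ ∃ i j l : Fin n, i < j ∧ j < l ∧ α i < α j ∧ α j < α l) ∧
        (¬ ∃ i j l : Fin n, i < j ∧ j < l ∧ α i < α l ∧ α l < α j)}
      = 2 ^ (n - 1)
    ∧ Set.ncard {α : Equiv.Perm (Fin n) |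
        (¬ ∃ i j l : Fin n, i < j ∧ j < l ∧ α j < α i ∧ α i < α l) ∧
        (¬ ∃ i j l : Fin n, i < j ∧ j < l ∧ α l < α i ∧ α i < α j)}
      = 2 ^ (n - 1) := by
  rw [PatternAvoidance.setOf_avoids_123_132, PatternAvoidance.setOf_avoids_213_231]
  exact ⟨PatternAvoidance.ncard_atMostOneLargerLater n, PatternAvoidance.ncard_extremalInSuffix n⟩

theorem stmt18 (n : ℕ) (hn : 3 ≤ n) :
    Set.ncard {α : Equiv.Perm (Fin n) |
        (¬ ∃ i j l : Fin n, i < j ∧ j < l ∧ α i < α j ∧ α j < α l) ∧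
        (¬ ∃ i j l : Fin n, i < j ∧ j < l ∧ α i < α l ∧ α l < α j)}
      = 2 ^ (n - 1)
    ∧ Set.ncard {α : Equiv.Perm (Fin n) |
        (¬ ∃ i j l : Fin n, i < j ∧ j < l ∧ α j < α i ∧ α i < α l) ∧
        (¬ ∃ i j l : Fin n, i < j ∧ j < l ∧ α l < α i ∧ α i < α j)}
      = 2 ^ (n - 1) :=
  stmt18_general n
end
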